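/- arXiv:2501.00908 — 11 statements merged into one kernel-verified Lean document; each statement's English description precedes it below -/
import Mathlib

section
/- Let G be a group, H ≤ G a subgroup with a group topology, and define the open preserver OP_G(H) as the set of g ∈ G such that for every identity neighbourhood O in H there exists an identity neighbourhood U in H with U ⊆ gOg⁻¹ ∩ g⁻¹Og. Then OP_G(H) is a subgroup of G, and the topology of H extends to a group topology on OP_G(H) in which H is open with its given topology. -/
open scoped Pointwise

/-- An element `g` of `G` preserves the opens of the subgroup `H` (with group topology `τH`):
for every identity neighbourhood `O` of `H` there is an identity neighbourhood `U` of `H`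
with `U ⊆ gOg⁻¹ ∩ g⁻¹Og`. -/
def PreservesOpens {G : Type*} [Group G] (H : Subgroup G) (τH : TopologicalSpace H)
    (g : G) : Prop :=
  ∀ O ∈ @nhds H τH 1, ∃ U ∈ @nhds H τH 1,
    (((↑) : H → G) '' U) ⊆
      ((fun x => g * x * g⁻¹) '' (((↑) : H → G) '' O)) ∩
      ((fun x => g⁻¹ * x * g) '' (((↑) : H → G) '' O))

/-!
Push the identity neighbourhoods of `H` forward to a filter `F` on `G`. An element `g` preserves
the opens of `H` exactly when conjugation by `g` and by `g⁻¹` both map `F` into itself, so the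
open preservers form the normalizer `K` of `F`, a subgroup containing `H`. On `K` the filter `F`
satisfies the axioms of the identity neighbourhood filter of a group topology, the conjugation
axiom being precisely the normalizing property. The resulting topology induces the original one
on `H`, and `H` is open in it, being a subgroup that is a neighbourhood of `1`.
-/

open Filter Topology Function Set

theorem Filter.exists_isTopologicalGroup_nhds_one_eq {G : Type*} [Group G] (F : Filter G)
    (hone : pure 1 ≤ F) (hmul : Tendsto (fun p : G × G => p.1 * p.2) (F ×ˢ F) F)
    (hinv : Tendsto (·⁻¹) F F) (hconj : ∀ g : G, Tendsto (fun x => g * x * g⁻¹) F F) :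
    ∃ τ : TopologicalSpace G, @IsTopologicalGroup G τ _ ∧ @nhds G τ 1 = F := by
  let B : GroupFilterBasis G :=
    { toFilterBasis := F.asBasis
      one' := fun hU => hone hU
      mul' := fun hU => by
        obtain ⟨V, hV, hVU⟩ := mem_prod_self_iff.1 (hmul hU)
        exact ⟨V, hV, Set.mul_subset_iff.2 fun x hx y hy => @hVU (x, y) ⟨hx, hy⟩⟩
      inv' := fun hU => ⟨_, hinv hU, subset_rfl⟩
      conj' := fun g _ hU => ⟨_, hconj g hU, subset_rfl⟩ }
  exact ⟨B.topology, B.isTopologicalGroup, B.nhds_one_eq.trans F.asBasis_filter⟩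

theorem MonoidHom.exists_isTopologicalGroup_isOpen_range_induced_eq {H K : Type*} [Group H]
    [τ : TopologicalSpace H] [IsTopologicalGroup H] [Group K] (j : H →* K) (hj : Injective j)
    (hconj : ∀ k : K, Tendsto (fun x => k * x * k⁻¹) (map j (𝓝 1)) (map j (𝓝 1))) :
    ∃ τK : TopologicalSpace K, IsTopologicalGroup K ∧ IsOpen (Set.range j) ∧
      TopologicalSpace.induced j τK = τ := by
  have hone : pure 1 ≤ map j (𝓝 1) := by
    simpa only [map_pure, map_one] using map_mono (m := j) (pure_le_nhds (1 : H))
  have hmul : Tendsto (fun p : K × K => p.1 * p.2) (map j (𝓝 1) ×ˢ map j (𝓝 1))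
      (map j (𝓝 1)) := by
    have : Tendsto (fun p : H × H => p.1 * p.2) (𝓝 1 ×ˢ 𝓝 1) (𝓝 1) := by
      simpa only [nhds_prod_eq, mul_one] using tendsto_mul (a := (1 : H)) (b := 1)
    rw [prod_map_map_eq, tendsto_map'_iff]
    simpa only [comp_def, Prod.map, map_mul] using (tendsto_map (f := j)).comp this
  have hinv : Tendsto (·⁻¹) (map j (𝓝 1)) (map j (𝓝 1)) := by
    have : Tendsto (·⁻¹) (𝓝 (1 : H)) (𝓝 1) := by simpa using continuous_inv.tendsto (1 : H)
    rw [tendsto_map'_iff]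
    simpa only [comp_def, map_inv] using (tendsto_map (f := j)).comp this
  obtain ⟨τK, hτK, hnhds⟩ := (map j (𝓝 1)).exists_isTopologicalGroup_nhds_one_eq hone hmul hinv hconj
  refine ⟨τK, hτK, ?_, ?_⟩
  · rw [← j.coe_range]
    refine j.range.isOpen_of_mem_nhds (g := 1) ?_
    rw [hnhds]
    exact mem_map.2 (by simp)
  · refine IsTopologicalGroup.ext (topologicalGroup_induced j) ‹_› ?_
    rw [nhds_induced, map_one, hnhds, comap_map hj]

namespace Filter

variable {G : Type*} [Group G]

def normalizer (F : Filter G) : Subgroup G where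
  carrier := {g | Tendsto (fun x => g * x * g⁻¹) F F ∧ Tendsto (fun x => g⁻¹ * x * g) F F}
  one_mem' := by
    simp only [Set.mem_ofPred_eq, one_mul, mul_one, inv_one, and_self]
    exact tendsto_id
  mul_mem' := fun {a b} ⟨ha, ha'⟩ ⟨hb, hb'⟩ =>
    ⟨by simpa [comp_def, mul_assoc] using ha.comp hb,
      by simpa [comp_def, mul_assoc] using hb'.comp ha'⟩
  inv_mem' := fun ⟨h, h'⟩ => ⟨by simpa using h', by simpa using h⟩

theorem mem_normalizer {F : Filter G} {g : G} :
    g ∈ F.normalizer ↔ Tendsto (fun x => g * x * g⁻¹) F F ∧ Tendsto (fun x => g⁻¹ * x * g) F F :=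
  Iff.rfl

end Filter

section PreservesOpens

variable {G : Type*} [Group G]

theorem Set.image_mul_mul_eq_preimage (a b : G) (s : Set G) :
    (fun x => a * x * b) '' s = (fun x => a⁻¹ * x * b⁻¹) ⁻¹' s :=
  congrFun (image_eq_preimage_of_inverse (f := fun x => a * x * b) (g := fun x => a⁻¹ * x * b⁻¹)
    (fun x => by group) (fun x => by group)) s

theorem preservesOpens_iff_mem_normalizer (H : Subgroup G) (τH : TopologicalSpace H) (g : G) :
    PreservesOpens H τH g ↔ g ∈ (map ((↑) : H → G) (@nhds H τH 1)).normalizer := by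
  have hF := (@nhds H τH 1).basis_sets.map ((↑) : H → G)
  rw [Filter.mem_normalizer]
  refine Iff.trans ?_ (tendsto_prod_iff' (s := fun x => (g * x * g⁻¹, g⁻¹ * x * g)))
  rw [hF.tendsto_iff hF.prod_self]
  simp only [PreservesOpens, Set.image_mul_mul_eq_preimage, inv_inv, subset_def, mem_inter_iff,
    mem_preimage, mem_prod, id, and_comm]

theorem Subgroup.tendsto_conj_map_coe_nhds_one (H : Subgroup G) [TopologicalSpace H]
    [IsTopologicalGroup H] (h : H) :
    Tendsto (fun x => (h : G) * x * (h : G)⁻¹) (Filter.map ((↑) : H → G) (𝓝 1))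
      (Filter.map ((↑) : H → G) (𝓝 1)) := by
  have hc : Continuous fun x : H => h * x * h⁻¹ := by fun_prop
  have : Tendsto (fun x => h * x * h⁻¹) (𝓝 (1 : H)) (𝓝 1) := by simpa using hc.tendsto 1
  rw [tendsto_map'_iff]
  exact (tendsto_map (f := ((↑) : H → G))).comp this

end PreservesOpens

/-- **The open preserver is a subgroup and the topology extends to it.**
Given a group `G`, a subgroup `H` with a group topology, the set `OP_G(H)` of elements of `G`
preserving the opens of `H` forms a subgroup `K` of `G` containing `H`, and there is a group
topology on `K` in which (the image of) `H` is open and carries its original topology. -/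
theorem open_preserver_subgroup_and_extension {G : Type*} [Group G] (H : Subgroup G)
    (τH : TopologicalSpace H) (hτH : @IsTopologicalGroup H τH _) :
    ∃ K : Subgroup G, (K : Set G) = {g : G | PreservesOpens H τH g} ∧
      ∃ hHK : H ≤ K, ∃ τK : TopologicalSpace K, @IsTopologicalGroup K τK _ ∧
        @IsOpen K τK (Set.range (Subgroup.inclusion hHK)) ∧
        TopologicalSpace.induced (Subgroup.inclusion hHK) τK = τH := by
  set K := (map ((↑) : H → G) (@nhds H τH 1)).normalizer
  have hHK : H ≤ K := fun h hh =>
    ⟨H.tendsto_conj_map_coe_nhds_one ⟨h, hh⟩,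
      by simpa using H.tendsto_conj_map_coe_nhds_one ⟨h, hh⟩⁻¹⟩
  have hconj (k : K) : Tendsto (fun x => k * x * k⁻¹) (map (Subgroup.inclusion hHK) (𝓝 1))
      (map (Subgroup.inclusion hHK) (𝓝 1)) := by
    -- pushed forward along the injection `K → G`, this is the normalizing property of `k`
    rw [Tendsto, ← map_le_map_iff Subtype.val_injective, map_map, map_map, map_map]
    exact k.2.1
  obtain ⟨τK, hτK, hopen, hinduced⟩ :=
    (Subgroup.inclusion hHK).exists_isTopologicalGroup_isOpen_range_induced_eq
      (Subgroup.inclusion_injective hHK) hconj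
  exact ⟨K, Set.ext fun g => (preservesOpens_iff_mem_normalizer H τH g).symm, hHK, τK, hτK,
    hopen, hinduced⟩
end

section
/- Let X be a compact zero-dimensional space and let G ≤ Homeo(X) be a piecewise full group. Then for any finite partition P of X into clopen subsets, the part-wise stabiliser K = ⋂_{Y ∈ P} G_Y decomposes as the internal direct product of the rigid stabilisers rist_G(Y) for Y ∈ P. -/
variable {X : Type*} [TopologicalSpace X]

/-- The group of self-homeomorphisms of `X` under composition. -/
instance : Group (X ≃ₜ X) where
  mul f g := g.trans f
  one := Homeomorph.refl X
  inv := Homeomorph.symm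
  mul_assoc _ _ _ := Homeomorph.ext fun _ => rfl
  one_mul _ := Homeomorph.ext fun _ => rfl
  mul_one _ := Homeomorph.ext fun _ => rfl
  inv_mul_cancel a := Homeomorph.ext fun x => a.symm_apply_apply x

/-- The rigid stabiliser of `Y`: elements of `G` fixing the complement of `Y` pointwise. -/
def rist (G : Subgroup (X ≃ₜ X)) (Y : Set X) : Set (X ≃ₜ X) :=
  {g | g ∈ G ∧ ∀ x ∉ Y, g x = x}

/-- `G ≤ Homeo(X)` is piecewise full: any homeomorphism agreeing piecewise, on a finite clopen
partition of `X`, with elements of `G` already belongs to `G`. -/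
def IsPiecewiseFull (G : Subgroup (X ≃ₜ X)) : Prop :=
  ∀ h : X ≃ₜ X,
    (∃ (n : ℕ) (α : Fin n → Set X) (g : Fin n → X ≃ₜ X),
      (∀ i, IsClopen (α i)) ∧ Pairwise (Function.onFun Disjoint α) ∧
      (⋃ i, α i) = Set.univ ∧ (∀ i, g i ∈ G) ∧ (∀ i, ∀ x ∈ α i, h x = g i x)) →
    h ∈ G

lemma mul_apply' (f g : X ≃ₜ X) (x : X) : (f * g) x = f (g x) := rfl

lemma one_apply' (x : X) : (1 : X ≃ₜ X) x = x := rfl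

lemma fix_mapsTo {f : X ≃ₜ X} {Y : Set X} (hf : ∀ x ∉ Y, f x = x) :
    ∀ x ∈ Y, f x ∈ Y := by
  intro x hx
  by_contra h
  have h2 : f x = x := f.injective (hf (f x) h)
  rw [h2] at h
  exact h hx

lemma prod_apply_aux : ∀ (n : ℕ) (β : Fin n → Set X) (f : Fin n → X ≃ₜ X),
    Pairwise (Function.onFun Disjoint β) →
    (∀ i, ∀ x ∉ β i, f i x = x) →
    ∀ x : X, ((∀ i, x ∉ β i) → (List.ofFn f).prod x = x) ∧
         (∀ j, x ∈ β j → (List.ofFn f).prod x = f j x) := by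
  intro n
  induction n with
  | zero =>
    intro β f _ _ x
    refine ⟨fun _ => ?_, fun j => j.elim0⟩
    simp [List.ofFn_zero, one_apply']
  | succ m IH =>
    intro β f hdisj hsupp x
    have hdisj' : Pairwise (Function.onFun Disjoint (β ∘ Fin.succ)) := by
      intro i j hij
      exact hdisj (fun e => hij (Fin.succ_injective _ e))
    have hsupp' : ∀ i, ∀ y, y ∉ (β ∘ Fin.succ) i → (f ∘ Fin.succ) i y = y :=
      fun i y hy => hsupp i.succ y hy
    have hrec := fun y => IH (β ∘ Fin.succ) (f ∘ Fin.succ) hdisj' hsupp' y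
    have hprod : (List.ofFn f).prod = f 0 * (List.ofFn (f ∘ Fin.succ)).prod := by
      rw [List.ofFn_succ, List.prod_cons]
      rfl
    constructor
    · intro hx
      rw [hprod, mul_apply', (hrec x).1 (fun i => hx i.succ), hsupp 0 x (hx 0)]
    · intro j hj
      rw [hprod, mul_apply']
      refine Fin.cases ?_ ?_ j hj
      · intro hx0
        have hrest : (List.ofFn (f ∘ Fin.succ)).prod x = x := by
          refine (hrec x).1 (fun i => ?_)
          exact Set.disjoint_left.mp (hdisj (Fin.succ_ne_zero i).symm) hx0
        rw [hrest]
      · intro i hxi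
        have hrest : (List.ofFn (f ∘ Fin.succ)).prod x = f i.succ x := (hrec x).2 i hxi
        rw [hrest]
        have hmem : f i.succ x ∈ β i.succ := fix_mapsTo (hsupp i.succ) x hxi
        exact hsupp 0 _ (Set.disjoint_left.mp (hdisj (Fin.succ_ne_zero i)) hmem)

open Classical in
/-- The homeomorphism agreeing with `k` on the `k`-invariant clopen set `Y` and with the
identity elsewhere. -/
noncomputable def pieceHomeo (k : X ≃ₜ X) (Y : Set X) (hY : IsClopen Y)
    (hk : ∀ x, k x ∈ Y ↔ x ∈ Y) : X ≃ₜ X where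
  toFun x := if x ∈ Y then k x else x
  invFun x := if x ∈ Y then k.symm x else x
  left_inv x := by
    by_cases h : x ∈ Y
    · simp [h, (hk x).mpr h]
    · simp [h]
  right_inv x := by
    by_cases h : x ∈ Y
    · have h2 : k.symm x ∈ Y := by
        have h3 := hk (k.symm x)
        rw [k.apply_symm_apply] at h3
        exact h3.mp h
      simp [h, h2]
    · simp [h]
  continuous_toFun := by
    have hfr : frontier {a : X | a ∈ Y} = ∅ := hY.frontier_eq
    refine Continuous.if ?_ k.continuous continuous_id
    intro a ha
    rw [hfr] at ha
    exact absurd ha (Set.notMem_empty a)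
  continuous_invFun := by
    have hfr : frontier {a : X | a ∈ Y} = ∅ := hY.frontier_eq
    refine Continuous.if ?_ k.symm.continuous continuous_id
    intro a ha
    rw [hfr] at ha
    exact absurd ha (Set.notMem_empty a)

open Classical in
lemma pieceHomeo_apply (k : X ≃ₜ X) (Y : Set X) (hY : IsClopen Y)
    (hk : ∀ x, k x ∈ Y ↔ x ∈ Y) (x : X) :
    pieceHomeo k Y hY hk x = if x ∈ Y then k x else x := rfl

/-- **Partwise stabilisers of piecewise full groups decompose as direct products of rigid
stabilisers.**  If `G ≤ Homeo(X)` is piecewise full (`X` compact zero-dimensional) and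
`α : Fin n → Set X` is a finite clopen partition of `X`, then the partwise stabiliser
`K = ⋂ᵢ G_{αᵢ}` is the internal direct product of the rigid stabilisers `rist_G(αᵢ)`:
every element of `K` is, in a unique way, the product of elements of the `rist_G(αᵢ)`. -/
theorem partwise_stabiliser_eq_product_of_rists
    [CompactSpace X] [T2Space X] [TotallyDisconnectedSpace X]
    (G : Subgroup (X ≃ₜ X)) (hG : IsPiecewiseFull G)
    (n : ℕ) (α : Fin n → Set X) (hclopen : ∀ i, IsClopen (α i))
    (hdisj : Pairwise (Function.onFun Disjoint α)) (hcover : (⋃ i, α i) = Set.univ) :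
    (∀ k : X ≃ₜ X,
      (k ∈ G ∧ ∀ i, (⇑k) '' α i = α i) ↔
        ∃ f : Fin n → (X ≃ₜ X), (∀ i, f i ∈ rist G (α i)) ∧ k = (List.ofFn f).prod) ∧
    (∀ f f' : Fin n → (X ≃ₜ X), (∀ i, f i ∈ rist G (α i)) → (∀ i, f' i ∈ rist G (α i)) →
      (List.ofFn f).prod = (List.ofFn f').prod → f = f') := by
  classical
  have hexists : ∀ x : X, ∃ j, x ∈ α j := fun x =>
    Set.mem_iUnion.mp (hcover ▸ Set.mem_univ x)
  constructor
  · intro k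
    constructor
    · rintro ⟨hkG, hkα⟩
      have hmem : ∀ i, ∀ x, k x ∈ α i ↔ x ∈ α i := by
        intro i x
        constructor
        · intro h
          rw [← hkα i] at h
          obtain ⟨z, hz, hzx⟩ := h
          rwa [← k.injective hzx]
        · intro h
          rw [← hkα i]
          exact ⟨x, h, rfl⟩
      set f : Fin n → X ≃ₜ X := fun i => pieceHomeo k (α i) (hclopen i) (hmem i) with hf
      have hsupp : ∀ i, ∀ x ∉ α i, f i x = x := by
        intro i x hx
        rw [hf, pieceHomeo_apply, if_neg hx]
      refine ⟨f, ?_, ?_⟩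
      · intro i
        refine ⟨?_, hsupp i⟩
        refine hG (f i) ⟨2, ![α i, (α i)ᶜ], ![k, 1], ?_, ?_, ?_, ?_, ?_⟩
        · intro j
          fin_cases j
          · exact hclopen i
          · exact (hclopen i).compl
        · intro a b hab
          fin_cases a <;> fin_cases b <;>
            first
              | exact absurd rfl hab
              | exact disjoint_compl_right
              | exact disjoint_compl_left
        · apply Set.eq_univ_of_forall
          intro x
          rw [Set.mem_iUnion]
          by_cases h : x ∈ α i
          · exact ⟨0, h⟩
          · exact ⟨1, h⟩
        · intro j
          fin_cases j
          · exact hkG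
          · exact G.one_mem
        · intro j
          fin_cases j
          · intro x hx
            exact if_pos (hx : x ∈ α i)
          · intro x hx
            exact if_neg (hx : x ∉ α i)
      · apply Homeomorph.ext
        intro x
        obtain ⟨j, hj⟩ := hexists x
        rw [(prod_apply_aux n α f hdisj hsupp x).2 j hj, hf, pieceHomeo_apply, if_pos hj]
    · rintro ⟨f, hf, rfl⟩
      have hsupp : ∀ i, ∀ x ∉ α i, f i x = x := fun i => (hf i).2
      constructor
      · refine Subgroup.list_prod_mem G ?_
        intro g hg
        rw [List.mem_ofFn] at hg
        obtain ⟨i, rfl⟩ := hg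
        exact (hf i).1
      · intro i
        apply subset_antisymm
        · rintro y ⟨x, hx, rfl⟩
          rw [(prod_apply_aux n α f hdisj hsupp x).2 i hx]
          exact fix_mapsTo (hsupp i) x hx
        · intro y hy
          set x := (List.ofFn f).prod.symm y with hxdef
          have hxy : (List.ofFn f).prod x = y := (List.ofFn f).prod.apply_symm_apply y
          obtain ⟨j, hj⟩ := hexists x
          have hyj : y ∈ α j := by
            rw [← hxy, (prod_apply_aux n α f hdisj hsupp x).2 j hj]
            exact fix_mapsTo (hsupp j) x hj
          have hji : j = i := by
            by_contra h
            exact Set.disjoint_left.mp (hdisj h) hyj hy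
          exact ⟨x, hji ▸ hj, hxy⟩
  · intro f f' hf hf' heq
    funext i
    apply Homeomorph.ext
    intro x
    by_cases hx : x ∈ α i
    · have h1 := (prod_apply_aux n α f hdisj (fun i => (hf i).2) x).2 i hx
      have h2 := (prod_apply_aux n α f' hdisj (fun i => (hf' i).2) x).2 i hx
      rw [← h1, ← h2, heq]
    · rw [(hf i).2 x hx, (hf' i).2 x hx]
end

section
/- Let X be a compact zero-dimensional space and let G ≤ Homeo(X) be micro-supported. Then for every closed subset Y of X, rist_G(Y) equals the centraliser in G of rist_G(X \ Y). -/
variable {X : Type*} [TopologicalSpace X]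

/-- `G` is micro-supported: the rigid stabiliser of every nonempty open set is non-trivial. -/
def IsMicroSupported (G : Subgroup (X ≃ₜ X)) : Prop :=
  ∀ U : Set X, IsOpen U → U.Nonempty → ∃ g ∈ rist G U, g ≠ 1

/-- **Rigid stabilisers of closed sets are centralisers.**
Let `X` be a compact zero-dimensional space and `G ≤ Homeo(X)` micro-supported.  Then for
every closed `Y ⊆ X`, `rist_G(Y)` equals the centraliser in `G` of `rist_G(X \ Y)`. -/
theorem rist_eq_centralizer_of_rist_compl
    [CompactSpace X] [T2Space X] [TotallyDisconnectedSpace X]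
    (G : Subgroup (X ≃ₜ X)) (hms : IsMicroSupported G)
    (Y : Set X) (hY : IsClosed Y) :
    rist G Y = {g | g ∈ G ∧ ∀ h ∈ rist G Yᶜ, g * h = h * g} := by
  ext g
  constructor
  · rintro ⟨hgG, hg⟩
    refine ⟨hgG, fun h ⟨hhG, hh⟩ => ?_⟩
    -- h fixes Y pointwise (since ∀ x ∉ Yᶜ, h x = x)
    have hhY : ∀ x ∈ Y, h x = x := fun x hx => hh x (by simpa using hx)
    apply Homeomorph.ext
    intro x
    show g (h x) = h (g x)
    by_cases hx : x ∈ Y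
    · rw [hhY x hx]
      -- need g x ∈ Y
      have hgx : g x ∈ Y := by
        by_contra hgx
        have := hg (g x) hgx
        have : g x = x := g.injective this
        exact hgx (this.symm ▸ hx)
      rw [hhY _ hgx]
    · rw [hg x hx]
      -- h x ∉ Y
      have hhx : h x ∉ Y := by
        intro hhx
        have := hhY (h x) hhx
        have : h x = x := h.injective this
        exact hx (this ▸ hhx)
      rw [hg _ hhx]
  · rintro ⟨hgG, hcomm⟩
    refine ⟨hgG, fun x hx => ?_⟩
    by_contra hne
    -- separate x and g x inside Yᶜ
    obtain ⟨V, W, hV, hW, hxV, hgxW, hVW⟩ := t2_separation (Ne.symm hne)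
    set U : Set X := V ∩ g ⁻¹' W ∩ Yᶜ with hU
    have hUopen : IsOpen U := ((hV.inter (hW.preimage g.continuous)).inter hY.isOpen_compl)
    have hxU : x ∈ U := ⟨⟨hxV, hgxW⟩, hx⟩
    obtain ⟨h, ⟨hhG, hh⟩, hh1⟩ := hms U hUopen ⟨x, hxU⟩
    -- h ∈ rist G Yᶜ
    have hhYc : h ∈ rist G Yᶜ := ⟨hhG, fun z hz => hh z fun hzU => hz hzU.2⟩
    have hcg := hcomm h hhYc
    -- h moves some y ∈ U
    obtain ⟨y, hy⟩ : ∃ y, h y ≠ y := by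
      by_contra hall
      push_neg at hall
      exact hh1 (Homeomorph.ext hall)
    have hyU : y ∈ U := by
      by_contra hyU
      exact hy (hh y hyU)
    -- g y ∉ U since g y ∈ W disjoint from V
    have hgyU : g y ∉ U := fun hgy =>
      Set.disjoint_left.mp hVW hgy.1.1 hyU.1.2
    have : g (h y) = h (g y) := congrArg (fun f : X ≃ₜ X => f y) hcg
    rw [hh (g y) hgyU] at this
    exact hy (g.injective this)
end

section
/- Let X be a compact zero-dimensional space, let G ≤ Homeo(X) be micro-supported, and let Y be a regular closed subset of X (Y closed with dense interior). Then the setwise stabiliser G_Y equals the normaliser in G of rist_G(Y). Consequently, in any Hausdorff group topology on G, G_Y is a closed subgroup. -/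
/-! The normaliser condition is turned into a commutation condition: `g` maps `Y` into `Y` iff
every conjugate `g r g⁻¹` with `r ∈ rist_G(Y)` commutes with every `s ∈ rist_G(X \ Y)`.
One direction is the commutation of homeomorphisms with disjoint supports. Conversely, if
`g Y ⊄ Y`, then, `Y` being regular closed, some point of `interior Y` is sent outside `Y`, and
micro-support gives `r ∈ rist_G(Y)` such that `g r g⁻¹` moves a point `z ∉ Y`; a non-trivial
`s` supported in a small neighbourhood `V` of `z` with `g r g⁻¹ V ∩ V = ∅` then fails to
commute with `g r g⁻¹`. Being defined by commutation relations, the stabiliser is closed in any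
Hausdorff group topology. -/

variable {X : Type*} [TopologicalSpace X]

namespace Homeomorph

lemma exists_apply_ne_of_ne_one {g : X ≃ₜ X} (hg : g ≠ 1) : ∃ x, g x ≠ x := by
  by_contra! h
  exact hg (Homeomorph.ext h)

lemma commute_of_forall_eq_or_eq {a b : X ≃ₜ X} (h : ∀ x, a x = x ∨ b x = x) :
    Commute a b :=
  Homeomorph.toEquiv_injective (Equiv.Perm.Disjoint.commute h)

lemma conj_apply_of_notMem_image {g r : X ≃ₜ X} {Y : Set X} (hr : ∀ x ∉ Y, r x = x)
    {x : X} (hx : x ∉ g '' Y) : (g * r * g⁻¹) x = x := by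
  have hgx : g.symm x ∉ Y := fun h => hx ⟨_, h, g.apply_symm_apply x⟩
  show g (r (g.symm x)) = x
  rw [hr _ hgx, g.apply_symm_apply]

lemma image_eq_iff_image_subset_and_inv {g : X ≃ₜ X} {Y : Set X} :
    g '' Y = Y ↔ g '' Y ⊆ Y ∧ (⇑g⁻¹) '' Y ⊆ Y := by
  rw [Set.Subset.antisymm_iff]
  exact and_congr_right' (g.toEquiv.symm_image_subset Y Y).symm

lemma image_subset_of_image_interior_subset {g : X ≃ₜ X} {Y : Set X} (hY : Y = closure (interior Y))
    (h : g '' interior Y ⊆ Y) : g '' Y ⊆ Y :=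
  calc g '' Y = closure (g '' interior Y) := by rw [← g.image_closure, ← hY]
    _ ⊆ Y := closure_minimal h (hY ▸ isClosed_closure)

end Homeomorph

open Homeomorph

section Rist

variable {G : Subgroup (X ≃ₜ X)}

lemma rist_mono {U V : Set X} (h : U ⊆ V) : rist G U ⊆ rist G V :=
  fun _ hg => ⟨hg.1, fun x hx => hg.2 x (fun hU => hx (h hU))⟩

lemma apply_mem_of_mem_rist {g : X ≃ₜ X} {U : Set X} (hg : g ∈ rist G U) {x : X}
    (hx : g x ≠ x) : x ∈ U := by
  by_contra hxU
  exact hx (hg.2 x hxU)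

lemma commute_of_fixes_compl_of_mem_rist_compl {Y : Set X} {a s : X ≃ₜ X}
    (ha : ∀ x ∉ Y, a x = x) (hs : s ∈ rist G Yᶜ) : Commute a s :=
  commute_of_forall_eq_or_eq fun x => by
    by_cases hx : x ∈ Y
    · exact Or.inr (hs.2 x (not_not_intro hx))
    · exact Or.inl (ha x hx)

lemma conj_mem_rist {Y : Set X} {g r : X ≃ₜ X} (hg : g ∈ G) (hgY : g '' Y ⊆ Y)
    (hr : r ∈ rist G Y) : g * r * g⁻¹ ∈ rist G Y :=
  ⟨mul_mem (mul_mem hg hr.1) (inv_mem hg),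
    fun _ hx => conj_apply_of_notMem_image hr.2 fun h => hx (hgY h)⟩

lemma IsMicroSupported.exists_mem_rist_apply_ne (hms : IsMicroSupported G) {U : Set X}
    (hU : IsOpen U) (hne : U.Nonempty) : ∃ g ∈ rist G U, ∃ x ∈ U, g x ≠ x := by
  obtain ⟨g, hgU, hg⟩ := hms U hU hne
  obtain ⟨x, hx⟩ := exists_apply_ne_of_ne_one hg
  exact ⟨g, hgU, x, apply_mem_of_mem_rist hgU hx, hx⟩

lemma not_commute_of_disjoint_image {a s : X ≃ₜ X} {V : Set X} (hV : ∀ y ∈ V, a y ∉ V)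
    (hs : s ∈ rist G V) {y : X} (hy : s y ≠ y) : ¬Commute a s := by
  intro hcomm
  have hsay : s (a y) = a y := hs.2 _ (hV y (apply_mem_of_mem_rist hs hy))
  have : a (s y) = s (a y) := congrArg (fun f : X ≃ₜ X => f y) hcomm.eq
  exact hy (a.injective (this.trans hsay))

lemma IsMicroSupported.exists_not_commute [T2Space X] (hms : IsMicroSupported G)
    {a : X ≃ₜ X} {x : X} (hx : a x ≠ x) {U : Set X} (hU : IsOpen U) (hxU : x ∈ U) :
    ∃ s ∈ rist G U, ¬Commute a s := by
  obtain ⟨V₁, V₂, hV₁, hV₂, hxV₁, haxV₂, hdisj⟩ := t2_separation hx.symm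
  set V : Set X := U ∩ V₁ ∩ a ⁻¹' V₂
  have hVo : IsOpen V := (hU.inter hV₁).inter (hV₂.preimage a.continuous)
  have haV : ∀ y ∈ V, a y ∉ V := fun y hy hay => hdisj.notMem_of_mem_left hay.1.2 hy.2
  obtain ⟨s, hsV, y, -, hy⟩ := hms.exists_mem_rist_apply_ne hVo ⟨x, ⟨hxU, hxV₁⟩, haxV₂⟩
  exact ⟨s, rist_mono (fun _ h => h.1.1) hsV, not_commute_of_disjoint_image haV hsV hy⟩

lemma image_subset_iff_forall_commute [T2Space X] (hms : IsMicroSupported G) {Y : Set X}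
    (hY : Y = closure (interior Y)) {g : X ≃ₜ X} :
    g '' Y ⊆ Y ↔ ∀ r ∈ rist G Y, ∀ s ∈ rist G Yᶜ, Commute (g * r * g⁻¹) s := by
  refine ⟨fun hgY r hr s hs => commute_of_fixes_compl_of_mem_rist_compl
    (fun _ hx => conj_apply_of_notMem_image hr.2 fun h => hx (hgY h)) hs, fun hc => ?_⟩
  apply image_subset_of_image_interior_subset hY
  by_contra hsub
  obtain ⟨_, ⟨x, hxY, rfl⟩, hgx⟩ := Set.not_subset.mp hsub
  have hYc : IsClosed Y := hY ▸ isClosed_closure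
  have hW : IsOpen (interior Y ∩ g ⁻¹' Yᶜ) :=
    isOpen_interior.inter (hYc.isOpen_compl.preimage g.continuous)
  obtain ⟨r, hrW, y, hyW, hy⟩ := hms.exists_mem_rist_apply_ne hW ⟨x, hxY, hgx⟩
  have hr : r ∈ rist G Y := rist_mono (fun _ h => interior_subset h.1) hrW
  have hmoves : (g * r * g⁻¹) (g y) ≠ g y := by
    simpa [mul_apply, inv_apply] using hy
  obtain ⟨s, hs, hnc⟩ := hms.exists_not_commute hmoves hYc.isOpen_compl hyW.2
  exact hnc (hc r hr s hs)

lemma image_subset_of_forall_conj_mem_rist [T2Space X] (hms : IsMicroSupported G) {Y : Set X}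
    (hY : Y = closure (interior Y)) {g : X ≃ₜ X}
    (h : ∀ r ∈ rist G Y, g * r * g⁻¹ ∈ rist G Y) : g '' Y ⊆ Y :=
  (image_subset_iff_forall_commute hms hY).2 fun r hr _ hs =>
    commute_of_fixes_compl_of_mem_rist_compl (h r hr).2 hs

lemma isClosed_setOf_image_subset [T2Space X] (hms : IsMicroSupported G) {Y : Set X}
    (hY : Y = closure (interior Y)) [TopologicalSpace G] [IsTopologicalGroup G] [T2Space G] :
    IsClosed {g : G | (g : X ≃ₜ X) '' Y ⊆ Y} := by
  have hset : {g : G | (g : X ≃ₜ X) '' Y ⊆ Y} =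
      ⋂ (r : rist G Y) (s : rist G Yᶜ),
        {g : G | Commute (g * ⟨r, r.2.1⟩ * g⁻¹) ⟨s, s.2.1⟩} := by
    ext g
    simp only [Set.mem_ofPred_eq, Set.mem_iInter, image_subset_iff_forall_commute hms hY,
      ← commute_map_iff (f := G.subtype) G.subtype_injective, map_mul, map_inv,
      Subgroup.subtype_apply, Subtype.forall]
  rw [hset]
  exact isClosed_iInter fun r => isClosed_iInter fun s =>
    isClosed_eq (by fun_prop) (by fun_prop)

end Rist

theorem setwise_stabiliser_eq_normalizer_of_rist_general
    [T2Space X]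
    (G : Subgroup (X ≃ₜ X)) (hms : IsMicroSupported G)
    (Y : Set X) (hY : Y = closure (interior Y)) :
    ({g | g ∈ G ∧ (⇑g) '' Y = Y}
        = {g | g ∈ G ∧ ∀ r : X ≃ₜ X, r ∈ rist G Y ↔ g * r * g⁻¹ ∈ rist G Y}) ∧
    (∀ τ : TopologicalSpace G, @IsTopologicalGroup G τ _ → @T2Space G τ →
      @IsClosed G τ {g : G | (⇑(g : X ≃ₜ X)) '' Y = Y}) := by
  refine ⟨Set.ext fun g => and_congr_right fun hg => ?_, fun τ _ _ => ?_⟩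
  · rw [image_eq_iff_image_subset_and_inv]
    constructor
    · rintro ⟨hgY, hginvY⟩ r
      refine ⟨conj_mem_rist hg hgY, fun hr => ?_⟩
      simpa [mul_assoc] using conj_mem_rist (inv_mem hg) hginvY hr
    · intro hn
      refine ⟨image_subset_of_forall_conj_mem_rist hms hY fun r hr => (hn r).1 hr,
        image_subset_of_forall_conj_mem_rist hms hY fun r hr => (hn _).2 ?_⟩
      simpa [mul_assoc] using hr
  · have hset : {g : G | (g : X ≃ₜ X) '' Y = Y} =
        {g : G | (g : X ≃ₜ X) '' Y ⊆ Y} ∩ (·⁻¹) ⁻¹' {g : G | (g : X ≃ₜ X) '' Y ⊆ Y} := by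
      ext g
      exact image_eq_iff_image_subset_and_inv
    rw [hset]
    have h := isClosed_setOf_image_subset hms hY (G := G)
    exact h.inter (h.preimage continuous_inv)

/-- **Setwise stabilisers of regular closed sets are normalisers of rigid stabilisers, and are
closed in any Hausdorff group topology.**
Let `X` be a compact zero-dimensional space, `G ≤ Homeo(X)` micro-supported and `Y ⊆ X`
regular closed (i.e. `Y` is the closure of its interior).  Then the setwise stabiliser `G_Y`
is the normaliser in `G` of `rist_G(Y)`; consequently, for any Hausdorff group topology on
`G`, the setwise stabiliser `G_Y` is a closed subgroup. -/
theorem setwise_stabiliser_eq_normalizer_of_rist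
    [CompactSpace X] [T2Space X] [TotallyDisconnectedSpace X]
    (G : Subgroup (X ≃ₜ X)) (hms : IsMicroSupported G)
    (Y : Set X) (hY : Y = closure (interior Y)) :
    ({g | g ∈ G ∧ (⇑g) '' Y = Y}
        = {g | g ∈ G ∧ ∀ r : X ≃ₜ X, r ∈ rist G Y ↔ g * r * g⁻¹ ∈ rist G Y}) ∧
    (∀ τ : TopologicalSpace G, @IsTopologicalGroup G τ _ → @T2Space G τ →
      @IsClosed G τ {g : G | (⇑(g : X ≃ₜ X)) '' Y = Y}) :=
  setwise_stabiliser_eq_normalizer_of_rist_general G hms Y hY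
end

section
/- Let M be an inverse monoid whose idempotents form a Boolean algebra with top element 1 and bottom element 0. Equip M with the compact-open topology generated by the sets V_{e,f} = {m : e ≤ m*m and mem* ≤ f}, their *-duals, and the sets V_{e,#} = {m : e·m*m = 0} and their *-duals, for idempotents e, f. Then: (i) M is a zero-dimensional topological inverse monoid; (ii) the idempotents form a discrete subspace; (iii) {0} is open and the group of units of M is clopen. -/
/-- An inverse monoid: a monoid in which every element `x` has a unique (semigroup) inverse,
denoted `star x`. -/
class InverseMonoid (M : Type*) extends Monoid M, Star M where
  mul_star_mul_self : ∀ x : M, x * star x * x = x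
  star_mul_self_star : ∀ x : M, star x * x * star x = star x
  star_unique : ∀ x y : M, x * y * x = x → y * x * y = y → y = star x

/-- The idempotents of an inverse monoid. -/
abbrev Idem (M : Type*) [InverseMonoid M] : Type _ := {e : M // IsIdempotentElem e}

section SubBasic
variable {M : Type*} [InverseMonoid M]

/-- `V_{e,f} = {m | e ≤ m*m, mem* ≤ f}`, the order on idempotents being `e ≤ s ↔ e * s = e`. -/
def Vef (e f : M) : Set M :=
  {m | e * (star m * m) = e ∧ (m * e * star m) * f = m * e * star m}

/-- The `*`-dual `V*_{e,f} = {m | e ≤ mm*, m*em ≤ f}`. -/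
def VefStar (e f : M) : Set M :=
  {m | e * (m * star m) = e ∧ (star m * e * m) * f = star m * e * m}

/-- `V_{e,#} = {m | e · m*m = 0}` (`z` plays the role of the zero). -/
def Vsharp (z e : M) : Set M := {m | e * (star m * m) = z}

/-- `V_{#,e} = {m | e · mm* = 0}` (`z` plays the role of the zero). -/
def sharpV (z e : M) : Set M := {m | e * (m * star m) = z}

/-- The compact-open topology on an inverse monoid, generated by the sets `V_{e,f}`, their
`*`-duals, and the sets `V_{e,#}`, `V_{#,e}`, over idempotents `e, f`. -/
def compactOpenTopology (z : M) : TopologicalSpace M :=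
  TopologicalSpace.generateFrom
    {s | ∃ e f : M, IsIdempotentElem e ∧ IsIdempotentElem f ∧
      (s = Vef e f ∨ s = VefStar e f ∨ s = Vsharp z e ∨ s = sharpV z e)}

end SubBasic

/-!
Everything is expressed through the domain `d(m) = m*m` and the conjugation `c_m(e) = m e m*`
of idempotents: `m ∈ V_{e,f}` iff `e ≤ d(m)` and `c_m(e) ≤ f`, and `m ∈ V_{e,#}` iff
`e ⊓ d(m) = 0`. Conjugation preserves meets, `c_{mn} = c_m ∘ c_n`, `d(mn) = c_{n*}(d(m))`, and
`c_{m*} ∘ c_m = d(m) ⊓ -`; in particular `c_m` kills no nonzero idempotent below `d(m)`.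

Multiplication is continuous because if `ab ∈ V_{e,f}` then `V_{beb*,f} · V_{e,beb*} ⊆ V_{e,f}`,
and if `ab ∈ V_{e,#}`, splitting `e` into `e₁ = e ⊓ d(b)` and `e₂ = e ⊓ d(b)^⊥` gives
`V_{be₁b*,#} · (V_{e₁,be₁b*} ∩ V_{e₂,#}) ⊆ V_{e,#}`; the starred sets follow because `*` swaps
the two families and reverses products. Every subbasic set is also closed: a point `m` outside
`V_{e,f}` lies in `V_{d(m)^⊥,#}` or in `V_{d,f^⊥}` for the part `d` of `e` that `m` conjugates
outside `f`, and these miss `V_{e,f}`. Hence finite intersections of subbasic sets form a clopen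
base. Finally `{e} = E(M) ∩ V_{e,1} ∩ V_{e^⊥,#}`, `{0} = V_{1,#}`, and the units are
`V*_{1,1} ∩ V_{1,1}`.
-/

theorem exists_isClopen_subset_of_generateFrom {X : Type*} [t : TopologicalSpace X]
    {S : Set (Set X)} (hS : t = TopologicalSpace.generateFrom S)
    (hS_closed : ∀ s ∈ S, IsClosed s) {U : Set X} (hU : IsOpen U) {x : X} (hx : x ∈ U) :
    ∃ V, IsClopen V ∧ x ∈ V ∧ V ⊆ U := by
  have hB := TopologicalSpace.isTopologicalBasis_of_subbasis hS
  obtain ⟨_, ⟨F, ⟨hF, hFS⟩, rfl⟩, hxV, hVU⟩ := hB.exists_subset_of_mem_open hx hU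
  exact ⟨_, ⟨isClosed_sInter fun s hs => hS_closed s (hFS hs), hB.isOpen ⟨F, ⟨hF, hFS⟩, rfl⟩⟩,
    hxV, hVU⟩

namespace InverseMonoid

variable {M : Type*} [InverseMonoid M]

protected theorem star_involutive : Function.Involutive (star : M → M) := fun x =>
  (star_unique _ _ (star_mul_self_star x) (mul_star_mul_self x)).symm

theorem mul_star_mul_self_assoc (x y : M) : x * (star x * (x * y)) = x * y := by
  rw [← mul_assoc, ← mul_assoc, mul_star_mul_self]

theorem star_eq_self_of_isIdempotentElem {e : M} (he : IsIdempotentElem e) : star e = e :=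
  (star_unique e e (by rw [he.eq, he.eq]) (by rw [he.eq, he.eq])).symm

theorem isIdempotentElem_star_mul_self (m : M) : IsIdempotentElem (star m * m) := by
  rw [IsIdempotentElem, ← mul_assoc, star_mul_self_star]

theorem isIdempotentElem_mul {e f : M} (he : IsIdempotentElem e) (hf : IsIdempotentElem f) :
    IsIdempotentElem (e * f) := by
  set x := star (e * f)
  have hx (y : M) : x * (e * (f * (x * y))) = x * y := by
    simpa only [mul_assoc] using congrArg (· * y) (star_mul_self_star (e * f))
  -- `f x e` is a second inverse of `e f`
  have hfxe : f * x * e = x := by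
    refine star_unique (e * f) _ ?_ ?_
    · simpa only [mul_assoc, he.mul_self_mul, hf.mul_self_mul] using mul_star_mul_self (e * f)
    · simp only [mul_assoc, he.mul_self_mul, hf.mul_self_mul, hx]
  have hx_idem : IsIdempotentElem x := by
    rw [IsIdempotentElem, ← hfxe]
    simp only [mul_assoc, hx]
  rwa [← InverseMonoid.star_involutive (e * f), star_eq_self_of_isIdempotentElem hx_idem]

theorem commute_of_isIdempotentElem {e f : M} (he : IsIdempotentElem e)
    (hf : IsIdempotentElem f) : Commute e f := by
  have hfe := star_unique (e * f) (f * e)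
    (by simpa only [mul_assoc, he.mul_self_mul, hf.mul_self_mul]
      using (isIdempotentElem_mul he hf).eq)
    (by simpa only [mul_assoc, he.mul_self_mul, hf.mul_self_mul]
      using (isIdempotentElem_mul hf he).eq)
  rw [star_eq_self_of_isIdempotentElem (isIdempotentElem_mul he hf)] at hfe
  exact hfe.symm

theorem isIdempotentElem_mul_star_self (m : M) : IsIdempotentElem (m * star m) := by
  simpa only [InverseMonoid.star_involutive m] using isIdempotentElem_star_mul_self (star m)

protected theorem star_mul (x y : M) : star (x * y) = star y * star x := by
  have key (x y : M) : x * y * (star y * star x) * (x * y) = x * y :=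
    calc x * y * (star y * star x) * (x * y) = x * ((y * star y) * (star x * x)) * y := by
          simp only [mul_assoc]
      _ = x * ((star x * x) * (y * star y)) * y := by
          rw [(commute_of_isIdempotentElem (isIdempotentElem_mul_star_self y)
            (isIdempotentElem_star_mul_self x)).eq]
      _ = x * y := by
          simp only [mul_assoc, mul_star_mul_self_assoc]
          rw [← mul_assoc y, mul_star_mul_self]
  refine (star_unique _ _ (key x y) ?_).symm
  simpa only [InverseMonoid.star_involutive x, InverseMonoid.star_involutive y]
    using key (star y) (star x)

instance : StarMul M where
  star_involutive := InverseMonoid.star_involutive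
  star_mul := InverseMonoid.star_mul

theorem mul_mul_star_mul {e : M} (he : IsIdempotentElem e) (m : M) :
    m * e * star m * m = m * e :=
  calc m * e * star m * m = m * (e * (star m * m)) := by simp only [mul_assoc]
    _ = m * (star m * m * e) := by
        rw [(commute_of_isIdempotentElem he (isIdempotentElem_star_mul_self m)).eq]
    _ = m * e := by simp only [mul_assoc, mul_star_mul_self_assoc]

theorem isIdempotentElem_conj (m : M) {e : M} (he : IsIdempotentElem e) :
    IsIdempotentElem (m * e * star m) := by
  simp only [IsIdempotentElem, ← mul_assoc, mul_mul_star_mul he, he.mul_mul_self]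

def dom (m : M) : Idem M := ⟨star m * m, isIdempotentElem_star_mul_self m⟩

def ran (m : M) : Idem M := ⟨m * star m, isIdempotentElem_mul_star_self m⟩

def conj (m : M) (e : Idem M) : Idem M := ⟨m * e * star m, isIdempotentElem_conj m e.2⟩

@[simp] theorem coe_dom (m : M) : (dom m : M) = star m * m := rfl

@[simp] theorem coe_ran (m : M) : (ran m : M) = m * star m := rfl

@[simp] theorem coe_conj (m : M) (e : Idem M) : (conj m e : M) = m * e * star m := rfl

theorem ran_star (m : M) : ran (star m) = dom m := Subtype.ext (by simp)

theorem dom_coe (e : Idem M) : dom (e : M) = e :=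
  Subtype.ext (by simp [star_eq_self_of_isIdempotentElem e.2, e.2.eq])

theorem conj_mul (m n : M) (e : Idem M) : conj (m * n) e = conj m (conj n e) :=
  Subtype.ext (by simp [mul_assoc])

theorem dom_mul (m n : M) : dom (m * n) = conj (star n) (dom m) :=
  Subtype.ext (by simp [mul_assoc])

theorem VefStar_eq_preimage (e f : M) : VefStar e f = star ⁻¹' Vef e f := by
  ext m
  simp [Vef, VefStar]

theorem sharpV_eq_preimage (z e : M) : sharpV z e = star ⁻¹' Vsharp z e := by
  ext m
  simp [Vsharp, sharpV]

theorem units_eq_VefStar_inter_Vef :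
    {m : M | m * star m = 1 ∧ star m * m = 1} = VefStar 1 1 ∩ Vef 1 1 := by
  ext m
  simp [Vef, VefStar]

class IsNaturalOrder (M : Type*) [InverseMonoid M] [LE (Idem M)] : Prop where
  le_iff : ∀ e f : Idem M, e ≤ f ↔ (e : M) * f = e

class IsBotZero (M : Type*) [InverseMonoid M] [Bot (Idem M)] : Prop where
  mul_bot : ∀ m : M, m * ((⊥ : Idem M) : M) = ((⊥ : Idem M) : M)

section Zero

variable [Bot (Idem M)] [IsBotZero M]

theorem bot_mul (m : M) : ((⊥ : Idem M) : M) * m = ((⊥ : Idem M) : M) := by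
  simpa [star_eq_self_of_isIdempotentElem (⊥ : Idem M).2] using
    congrArg star (IsBotZero.mul_bot (star m))

theorem conj_bot (m : M) : conj m ⊥ = ⊥ :=
  Subtype.ext (by rw [coe_conj, IsBotZero.mul_bot, bot_mul])

theorem dom_eq_bot_iff {m : M} : dom m = ⊥ ↔ m = ((⊥ : Idem M) : M) := by
  refine ⟨fun h => ?_, fun h => by rw [h, dom_coe]⟩
  rw [← mul_star_mul_self m, mul_assoc, ← coe_dom, h, IsBotZero.mul_bot]

end Zero

section SemilatticeInf

variable [SemilatticeInf (Idem M)] [IsNaturalOrder M]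

theorem le_iff_mul_eq {e f : Idem M} : e ≤ f ↔ (e : M) * f = e := IsNaturalOrder.le_iff (M := M) e f

theorem coe_inf (e f : Idem M) : ((e ⊓ f : Idem M) : M) = e * f := by
  suffices e ⊓ f = ⟨e * f, isIdempotentElem_mul e.2 f.2⟩ from congrArg Subtype.val this
  refine le_antisymm ?_ (le_inf ?_ ?_) <;> rw [le_iff_mul_eq]
  · rw [← mul_assoc, le_iff_mul_eq.mp inf_le_left, le_iff_mul_eq.mp inf_le_right]
  · change (e : M) * f * e = e * f
    rw [mul_assoc, (commute_of_isIdempotentElem f.2 e.2).eq, ← mul_assoc, e.2.eq]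
  · exact f.2.mul_mul_self e

theorem conj_inf (m : M) (e f : Idem M) : conj m (e ⊓ f) = conj m e ⊓ conj m f := by
  ext
  simp only [coe_conj, coe_inf, ← mul_assoc, mul_mul_star_mul e.2]

theorem conj_mono (m : M) {e f : Idem M} (h : e ≤ f) : conj m e ≤ conj m f := by
  rw [← inf_eq_left] at h ⊢
  rw [← conj_inf, h]

theorem conj_le_ran (m : M) (e : Idem M) : conj m e ≤ ran m := by
  rw [le_iff_mul_eq, coe_conj, coe_ran, mul_assoc, ← mul_assoc (star m), star_mul_self_star]

theorem conj_conj_star (m : M) (e : Idem M) : conj m (conj (star m) e) = ran m ⊓ e := by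
  ext
  calc m * (star m * e * star (star m)) * star m = m * star m * (e * (m * star m)) := by
        simp only [star_star, mul_assoc]
    _ = m * star m * e := by
        rw [(commute_of_isIdempotentElem e.2 (isIdempotentElem_mul_star_self m)).eq,
          ← mul_assoc, (isIdempotentElem_mul_star_self m).eq]
    _ = (ran m ⊓ e : Idem M) := (coe_inf (ran m) e).symm

theorem conj_star_conj (m : M) (e : Idem M) : conj (star m) (conj m e) = dom m ⊓ e := by
  simpa [ran_star] using conj_conj_star (star m) e

theorem dom_mul_le (m n : M) : dom (m * n) ≤ dom n := by
  rw [dom_mul, ← ran_star n]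
  exact conj_le_ran (star n) (dom m)

theorem mem_Vef_iff {m : M} {e f : Idem M} : m ∈ Vef (e : M) f ↔ e ≤ dom m ∧ conj m e ≤ f :=
  and_congr (le_iff_mul_eq (f := dom m)).symm (le_iff_mul_eq (e := conj m e)).symm

theorem mul_mem_Vef {e g f : Idem M} {m n : M} (hm : m ∈ Vef (g : M) f)
    (hn : n ∈ Vef (e : M) g) : m * n ∈ Vef (e : M) f := by
  rw [mem_Vef_iff] at hm hn ⊢
  constructor
  · rw [dom_mul, ← inf_eq_right.mpr hn.1, ← conj_star_conj]
    exact conj_mono _ (hn.2.trans hm.1)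
  · rw [conj_mul]
    exact (conj_mono m hn.2).trans hm.2

theorem mem_Vef_of_mul_mem {e f : Idem M} {a b : M} (h : a * b ∈ Vef (e : M) f) :
    a ∈ Vef (conj b e : M) f ∧ b ∈ Vef (e : M) (conj b e) := by
  rw [mem_Vef_iff] at h ⊢
  rw [mem_Vef_iff]
  refine ⟨⟨?_, by rw [← conj_mul]; exact h.2⟩, h.1.trans (dom_mul_le a b), le_rfl⟩
  calc conj b e ≤ conj b (dom (a * b)) := conj_mono b h.1
    _ = ran b ⊓ dom a := by rw [dom_mul, conj_conj_star]
    _ ≤ dom a := inf_le_right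

end SemilatticeInf

section BooleanAlgebra

variable [BooleanAlgebra (Idem M)] [IsNaturalOrder M]

theorem conj_eq_bot_iff [IsBotZero M] {m : M} {e : Idem M} (he : e ≤ dom m) :
    conj m e = ⊥ ↔ e = ⊥ := by
  refine ⟨fun h => ?_, fun h => h ▸ conj_bot m⟩
  rw [← inf_eq_right.mpr he, ← conj_star_conj, h, conj_bot]

theorem disjoint_conj_iff [IsBotZero M] {m : M} {e f : Idem M} :
    Disjoint (conj m e) f ↔ Disjoint e (conj (star m) f) := by
  have hinf : conj m e ⊓ f = conj m (e ⊓ conj (star m) f) := by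
    rw [conj_inf, conj_conj_star, ← inf_assoc, inf_eq_left.mpr (conj_le_ran m e)]
  have hle : e ⊓ conj (star m) f ≤ dom m := by
    rw [← ran_star m]
    exact inf_le_right.trans (conj_le_ran (star m) f)
  rw [disjoint_iff, disjoint_iff, hinf, conj_eq_bot_iff hle]

theorem mem_Vsharp_iff {m : M} {e : Idem M} :
    m ∈ Vsharp ((⊥ : Idem M) : M) e ↔ Disjoint e (dom m) := by
  rw [disjoint_iff, ← Subtype.coe_inj, coe_inf]
  rfl

theorem mul_mem_Vsharp [IsBotZero M] {e₁ e₂ g : Idem M} {m n : M}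
    (hm : m ∈ Vsharp ((⊥ : Idem M) : M) g) (hn₁ : n ∈ Vef (e₁ : M) g)
    (hn₂ : n ∈ Vsharp ((⊥ : Idem M) : M) e₂) :
    m * n ∈ Vsharp ((⊥ : Idem M) : M) (e₁ ⊔ e₂ : Idem M) := by
  rw [mem_Vsharp_iff] at hm hn₂ ⊢
  rw [mem_Vef_iff] at hn₁
  refine disjoint_sup_left.mpr ⟨?_, hn₂.mono_right (dom_mul_le m n)⟩
  rw [dom_mul]
  exact disjoint_conj_iff.mp (hm.mono_left hn₁.2)

theorem mem_of_mul_mem_Vsharp [IsBotZero M] {e : Idem M} {a b : M}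
    (h : a * b ∈ Vsharp ((⊥ : Idem M) : M) e) :
    a ∈ Vsharp ((⊥ : Idem M) : M) (conj b (e ⊓ dom b)) ∧
      b ∈ Vef ((e ⊓ dom b : Idem M) : M) (conj b (e ⊓ dom b) : M) ∧
      b ∈ Vsharp ((⊥ : Idem M) : M) (e ⊓ (dom b)ᶜ : Idem M) := by
  rw [mem_Vsharp_iff] at h
  rw [mem_Vsharp_iff, mem_Vsharp_iff, mem_Vef_iff, disjoint_conj_iff, ← dom_mul]
  exact ⟨h.mono_left inf_le_left, ⟨inf_le_right, le_rfl⟩,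
    disjoint_compl_left.mono_left inf_le_right⟩

theorem disjoint_Vsharp_Vef {d e : Idem M} (h : ¬ Disjoint d e) (f : Idem M) :
    Disjoint (Vsharp ((⊥ : Idem M) : M) d) (Vef (e : M) f) :=
  Set.disjoint_left.mpr fun _ hd he =>
    h ((mem_Vsharp_iff.mp hd).mono_right (mem_Vef_iff.mp he).1)

theorem disjoint_Vef_Vef [IsBotZero M] {d e f f' : Idem M} (hd : d ≠ ⊥) (hde : d ≤ e)
    (hf : Disjoint f' f) : Disjoint (Vef (d : M) f') (Vef (e : M) f) := by
  refine Set.disjoint_left.mpr fun n hd' he => hd ?_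
  rw [mem_Vef_iff] at hd' he
  rw [← conj_eq_bot_iff hd'.1, ← le_bot_iff]
  exact hf (hd'.2) ((conj_mono n hde).trans he.2)

theorem Vsharp_top_eq_singleton [IsBotZero M] :
    Vsharp ((⊥ : Idem M) : M) (⊤ : Idem M) = {((⊥ : Idem M) : M)} := by
  ext m
  rw [mem_Vsharp_iff, top_disjoint, dom_eq_bot_iff, Set.mem_singleton_iff]

theorem preimage_coe_Vef_inter_Vsharp (e : Idem M) :
    ((↑) : Idem M → M) ⁻¹' (Vef (e : M) (⊤ : Idem M) ∩ Vsharp ((⊥ : Idem M) : M) (eᶜ : Idem M)) =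
      {e} := by
  ext w
  rw [Set.mem_preimage, Set.mem_inter_iff, mem_Vef_iff, mem_Vsharp_iff, dom_coe,
    disjoint_compl_left_iff, Set.mem_singleton_iff]
  exact ⟨fun h => le_antisymm h.2 h.1.1, fun h => ⟨⟨h.ge, le_top⟩, h.le⟩⟩

end BooleanAlgebra

section Topology

variable [BooleanAlgebra (Idem M)]

local instance : TopologicalSpace M := compactOpenTopology ((⊥ : Idem M) : M)

theorem isOpen_Vef (e f : Idem M) : IsOpen (Vef (e : M) f) :=
  TopologicalSpace.isOpen_generateFrom_of_mem ⟨e, f, e.2, f.2, .inl rfl⟩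

theorem isOpen_Vsharp (e : Idem M) : IsOpen (Vsharp ((⊥ : Idem M) : M) e) :=
  TopologicalSpace.isOpen_generateFrom_of_mem ⟨e, e, e.2, e.2, .inr (.inr (.inl rfl))⟩

protected theorem continuous_star : Continuous (star : M → M) := by
  have hstar (s : Set M) : star ⁻¹' (star ⁻¹' s) = s := by
    rw [← Set.preimage_comp, star_involutive.comp_self, Set.preimage_id]
  refine continuous_generateFrom_iff.mpr ?_
  rintro _ ⟨e, f, he, hf, rfl | rfl | rfl | rfl⟩
  · rw [← VefStar_eq_preimage]
    exact TopologicalSpace.isOpen_generateFrom_of_mem ⟨e, f, he, hf, .inr (.inl rfl)⟩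
  · rw [VefStar_eq_preimage, hstar]
    exact isOpen_Vef ⟨e, he⟩ ⟨f, hf⟩
  · rw [← sharpV_eq_preimage]
    exact TopologicalSpace.isOpen_generateFrom_of_mem ⟨e, f, he, hf, .inr (.inr (.inr rfl))⟩
  · rw [sharpV_eq_preimage, hstar]
    exact isOpen_Vsharp ⟨e, he⟩

variable [IsNaturalOrder M]

theorem isOpen_preimage_mul_Vef (e f : Idem M) :
    IsOpen ((fun p : M × M => p.1 * p.2) ⁻¹' Vef (e : M) f) := by
  refine isOpen_prod_iff.mpr fun a b hab => ?_
  obtain ⟨ha, hb⟩ := mem_Vef_of_mul_mem hab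
  exact ⟨_, _, isOpen_Vef _ _, isOpen_Vef _ _, ha, hb, fun p hp => mul_mem_Vef hp.1 hp.2⟩

theorem isOpen_preimage_mul_Vsharp [IsBotZero M] (e : Idem M) :
    IsOpen ((fun p : M × M => p.1 * p.2) ⁻¹' Vsharp ((⊥ : Idem M) : M) e) := by
  refine isOpen_prod_iff.mpr fun a b hab => ?_
  obtain ⟨ha, hb₁, hb₂⟩ := mem_of_mul_mem_Vsharp hab
  refine ⟨_, _, isOpen_Vsharp _, (isOpen_Vef _ _).inter (isOpen_Vsharp _), ha, ⟨hb₁, hb₂⟩,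
    fun p hp => ?_⟩
  have hp' := mul_mem_Vsharp hp.1 hp.2.1 hp.2.2
  rwa [sup_inf_inf_compl] at hp'

protected theorem continuous_mul [IsBotZero M] : Continuous fun p : M × M => p.1 * p.2 := by
  have hswap : Continuous fun p : M × M => (star p.2, star p.1) :=
    (InverseMonoid.continuous_star.comp continuous_snd).prodMk
      (InverseMonoid.continuous_star.comp continuous_fst)
  have hstar (s : Set M) (hs : IsOpen ((fun p : M × M => p.1 * p.2) ⁻¹' s)) :
      IsOpen ((fun p : M × M => p.1 * p.2) ⁻¹' (star ⁻¹' s)) := by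
    convert hs.preimage hswap using 1
    ext
    simp
  refine continuous_generateFrom_iff.mpr ?_
  rintro _ ⟨e, f, he, hf, rfl | rfl | rfl | rfl⟩
  · exact isOpen_preimage_mul_Vef ⟨e, he⟩ ⟨f, hf⟩
  · rw [VefStar_eq_preimage]
    exact hstar _ (isOpen_preimage_mul_Vef ⟨e, he⟩ ⟨f, hf⟩)
  · exact isOpen_preimage_mul_Vsharp ⟨e, he⟩
  · rw [sharpV_eq_preimage]
    exact hstar _ (isOpen_preimage_mul_Vsharp ⟨e, he⟩)

theorem isClosed_Vef [IsBotZero M] (e f : Idem M) : IsClosed (Vef (e : M) f) := by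
  refine isOpen_compl_iff.mp (isOpen_iff_forall_mem_open.mpr fun m hm => ?_)
  by_cases he : e ≤ dom m
  · have hf : ¬ conj m e ≤ f := fun h => hm (mem_Vef_iff.mpr ⟨he, h⟩)
    set d := e ⊓ conj (star m) fᶜ
    have hd : d ≠ ⊥ := fun h =>
      hf (disjoint_compl_right_iff.mp (disjoint_conj_iff.mpr (disjoint_iff.mpr h)))
    have hdm : d ≤ dom m := inf_le_right.trans (ran_star m ▸ conj_le_ran (star m) fᶜ)
    have hmd : conj m d ≤ fᶜ :=
      (conj_mono m inf_le_right).trans (conj_conj_star m fᶜ ▸ inf_le_right)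
    exact ⟨_, le_compl_iff_disjoint_right.mpr (disjoint_Vef_Vef hd inf_le_left disjoint_compl_left),
      isOpen_Vef _ _, mem_Vef_iff.mpr ⟨hdm, hmd⟩⟩
  · exact ⟨_, le_compl_iff_disjoint_right.mpr
      (disjoint_Vsharp_Vef (mt disjoint_compl_left_iff.mp he) f),
      isOpen_Vsharp (dom m)ᶜ, mem_Vsharp_iff.mpr disjoint_compl_left⟩

theorem isClosed_Vsharp (e : Idem M) : IsClosed (Vsharp ((⊥ : Idem M) : M) e) :=
  isOpen_compl_iff.mp <| isOpen_iff_forall_mem_open.mpr fun _ hm =>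
    ⟨_, le_compl_iff_disjoint_left.mpr (disjoint_Vsharp_Vef (mt mem_Vsharp_iff.mpr hm) ⊤),
      isOpen_Vef _ _, mem_Vef_iff.mpr ⟨le_rfl, le_top⟩⟩

theorem exists_isClopen_subset [IsBotZero M] {U : Set M} (hU : IsOpen U) {x : M} (hx : x ∈ U) :
    ∃ V, IsClopen V ∧ x ∈ V ∧ V ⊆ U := by
  refine exists_isClopen_subset_of_generateFrom rfl ?_ hU hx
  rintro _ ⟨e, f, he, hf, rfl | rfl | rfl | rfl⟩
  · exact isClosed_Vef ⟨e, he⟩ ⟨f, hf⟩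
  · rw [VefStar_eq_preimage]
    exact (isClosed_Vef ⟨e, he⟩ ⟨f, hf⟩).preimage InverseMonoid.continuous_star
  · exact isClosed_Vsharp ⟨e, he⟩
  · rw [sharpV_eq_preimage]
    exact (isClosed_Vsharp ⟨e, he⟩).preimage InverseMonoid.continuous_star

theorem discreteTopology_idem : DiscreteTopology (Idem M) :=
  discreteTopology_iff_isOpen_singleton.mpr fun e => isOpen_induced_iff.mpr
    ⟨_, (isOpen_Vef e ⊤).inter (isOpen_Vsharp eᶜ), preimage_coe_Vef_inter_Vsharp e⟩

theorem isOpen_singleton_bot [IsBotZero M] : IsOpen {((⊥ : Idem M) : M)} :=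
  Vsharp_top_eq_singleton (M := M) ▸ isOpen_Vsharp ⊤

theorem isClopen_units [IsBotZero M] : IsClopen {m : M | m * star m = 1 ∧ star m * m = 1} := by
  have hVef : IsClopen (Vef (1 : M) 1) := ⟨isClosed_Vef 1 1, isOpen_Vef 1 1⟩
  rw [units_eq_VefStar_inter_Vef, VefStar_eq_preimage]
  exact (hVef.preimage InverseMonoid.continuous_star).inter hVef

end Topology

end InverseMonoid

theorem compactOpen_zeroDimensional_inverse_monoid_general {M : Type*} [InverseMonoid M]
    [BooleanAlgebra (Idem M)]
    (horder : ∀ e f : Idem M, e ≤ f ↔ (e : M) * f = e)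
    (hbot : ∀ m : M, ((⊥ : Idem M) : M) * m = ((⊥ : Idem M) : M) ∧
      m * ((⊥ : Idem M) : M) = ((⊥ : Idem M) : M)) :
    letI : TopologicalSpace M := compactOpenTopology (((⊥ : Idem M) : M))
    Continuous (fun p : M × M => p.1 * p.2) ∧
    Continuous (star : M → M) ∧
    (∀ s : Set M, IsOpen s → ∀ x ∈ s, ∃ t : Set M, IsClopen t ∧ x ∈ t ∧ t ⊆ s) ∧
    DiscreteTopology (Idem M) ∧
    IsOpen ({((⊥ : Idem M) : M)} : Set M) ∧
    IsClopen {m : M | m * star m = 1 ∧ star m * m = 1} := by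
  have : InverseMonoid.IsNaturalOrder M := ⟨horder⟩
  have : InverseMonoid.IsBotZero M := ⟨fun m => (hbot m).2⟩
  exact ⟨InverseMonoid.continuous_mul, InverseMonoid.continuous_star,
    fun _ hs _ hx => InverseMonoid.exists_isClopen_subset hs hx,
    InverseMonoid.discreteTopology_idem, InverseMonoid.isOpen_singleton_bot,
    InverseMonoid.isClopen_units⟩

/-- **The compact-open topology on an inverse monoid with Boolean algebra of idempotents.**
Let `M` be an inverse monoid whose idempotents form a Boolean algebra (for the natural
partial order, with top `1` and absorbing bottom `0`).  Equip `M` with the compact-open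
topology.  Then: (i) `M` is a zero-dimensional topological inverse monoid (multiplication
and `star` are continuous, and there is a base of clopen sets); (ii) the idempotents form a
discrete subspace; (iii) `{0}` is open and the group of units of `M` is clopen. -/
theorem compactOpen_zeroDimensional_inverse_monoid {M : Type*} [InverseMonoid M]
    [BooleanAlgebra (Idem M)]
    (horder : ∀ e f : Idem M, e ≤ f ↔ (e : M) * f = e)
    (htop : ((⊤ : Idem M) : M) = 1)
    (hbot : ∀ m : M, ((⊥ : Idem M) : M) * m = ((⊥ : Idem M) : M) ∧
      m * ((⊥ : Idem M) : M) = ((⊥ : Idem M) : M)) :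
    letI : TopologicalSpace M := compactOpenTopology (((⊥ : Idem M) : M))
    Continuous (fun p : M × M => p.1 * p.2) ∧
    Continuous (star : M → M) ∧
    (∀ s : Set M, IsOpen s → ∀ x ∈ s, ∃ t : Set M, IsClopen t ∧ x ∈ t ∧ t ⊆ s) ∧
    DiscreteTopology (Idem M) ∧
    IsOpen ({((⊥ : Idem M) : M)} : Set M) ∧
    IsClopen {m : M | m * star m = 1 ∧ star m * m = 1} :=
  compactOpen_zeroDimensional_inverse_monoid_general horder hbot
end

section
/- Let M be a topological inverse monoid whose idempotents form a Boolean algebra with top 1 and bottom 0, and suppose the set of idempotents is a discrete subspace of M. Then the topology of M refines the compact-open topology (the topology generated by the sets V_{e,f}, V*_{e,f}, V_{e,#}, V_{#,e} over idempotents e, f). -/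
section Aux
variable {M : Type*} [InverseMonoid M]

private lemma IM.idem_star_mul (m : M) : IsIdempotentElem (star m * m) := by
  show (star m * m) * (star m * m) = star m * m
  calc (star m * m) * (star m * m) = star m * (m * star m * m) := by simp [mul_assoc]
    _ = star m * m := by rw [InverseMonoid.mul_star_mul_self]

private lemma IM.idem_mul_star (m : M) : IsIdempotentElem (m * star m) := by
  show (m * star m) * (m * star m) = m * star m
  calc (m * star m) * (m * star m) = (m * star m * m) * star m := by simp [mul_assoc]
    _ = m * star m := by rw [InverseMonoid.mul_star_mul_self]

private lemma IM.idem_mul {e f : M} (he : IsIdempotentElem e) (hf : IsIdempotentElem f) :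
    IsIdempotentElem (e * f) := by
  set x := star (e * f) with hx
  have hinv1 : (e * f) * x * (e * f) = e * f := InverseMonoid.mul_star_mul_self (e * f)
  have hinv2 : x * (e * f) * x = x := InverseMonoid.star_mul_self_star (e * f)
  have he' : ∀ t : M, e * (e * t) = e * t := fun t => by rw [← mul_assoc, he]
  have hf' : ∀ t : M, f * (f * t) = f * t := fun t => by rw [← mul_assoc, hf]
  have hinv1'' : e * (f * (x * (e * f))) = e * f := by simpa [mul_assoc] using hinv1
  have hinv2' : ∀ t : M, x * (e * (f * (x * t))) = x * t := fun t => by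
    have := congrArg (· * t) hinv2; simpa [mul_assoc] using this
  have key1 : (e * f) * (f * x * e) * (e * f) = e * f := by
    simp only [mul_assoc, hf', he', hinv1'']
  have key2 : (f * x * e) * (e * f) * (f * x * e) = f * x * e := by
    simp only [mul_assoc, he', hf', hinv2']
  have hxe : f * x * e = x := InverseMonoid.star_unique (e * f) (f * x * e) key1 key2
  have hxidem : IsIdempotentElem x := by
    show x * x = x
    have h : (f * x * e) * (f * x * e) = f * x * e := by
      rw [show (f * x * e) * (f * x * e) = f * (x * (e * (f * (x * e)))) by simp [mul_assoc],
        hinv2' e, ← mul_assoc]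
    rwa [hxe] at h
  have hef : e * f = star x := InverseMonoid.star_unique x (e * f) hinv2 hinv1
  have hxx : x * x * x = x := by rw [hxidem, hxidem]
  have hself : x = star x := InverseMonoid.star_unique x x hxx hxx
  have h : e * f = x := hef.trans hself.symm
  rw [h]; exact hxidem

private lemma IM.idem_comm {e f : M} (he : IsIdempotentElem e) (hf : IsIdempotentElem f) :
    e * f = f * e := by
  have hef := IM.idem_mul he hf
  have h1 : (e * f) * (f * e) * (e * f) = e * f := by
    have : (e * f) * (f * e) * (e * f) = e * (f * f) * (e * e) * f := by simp [mul_assoc]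
    rw [this, hf, he]
    calc e * f * e * f = (e * f) * (e * f) := by simp [mul_assoc]
      _ = e * f := hef
  have h2 : (f * e) * (e * f) * (f * e) = f * e := by
    have hfe := IM.idem_mul hf he
    have : (f * e) * (e * f) * (f * e) = f * (e * e) * (f * f) * e := by simp [mul_assoc]
    rw [this, he, hf]
    calc f * e * f * e = (f * e) * (f * e) := by simp [mul_assoc]
      _ = f * e := hfe
  have ha : f * e = star (e * f) := InverseMonoid.star_unique (e * f) (f * e) h1 h2
  have hefef : (e * f) * (e * f) * (e * f) = e * f := by rw [hef, hef]
  have hb : e * f = star (e * f) := InverseMonoid.star_unique (e * f) (e * f) hefef hefef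
  exact hb.trans ha.symm

private lemma IM.idem_sandwich {e : M} (he : IsIdempotentElem e) (m : M) :
    IsIdempotentElem (m * e * star m) := by
  show (m * e * star m) * (m * e * star m) = m * e * star m
  have hcomm : e * (star m * m) = (star m * m) * e := IM.idem_comm he (IM.idem_star_mul m)
  calc (m * e * star m) * (m * e * star m)
      = m * (e * (star m * m) * e) * star m := by simp [mul_assoc]
    _ = m * ((star m * m) * (e * e)) * star m := by rw [hcomm]; simp [mul_assoc]
    _ = m * (star m * m * e) * star m := by rw [he]
    _ = m * star m * m * e * star m := by simp [mul_assoc]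
    _ = m * e * star m := by
        have : m * star m * m = m := InverseMonoid.mul_star_mul_self m
        rw [this]

private lemma IM.star_star (m : M) : star (star m) = m := by
  exact (InverseMonoid.star_unique (star m) m (InverseMonoid.star_mul_self_star m)
    (InverseMonoid.mul_star_mul_self m)).symm

private lemma IM.isOpen_pre [TopologicalSpace M] [DiscreteTopology (Idem M)]
    (g : M → M) (hg : Continuous g) (hi : ∀ m, IsIdempotentElem (g m)) (S : Set (Idem M)) :
    IsOpen {m | (⟨g m, hi m⟩ : Idem M) ∈ S} := by
  have hc : Continuous fun m => (⟨g m, hi m⟩ : Idem M) := hg.subtype_mk hi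
  exact (isOpen_discrete S).preimage hc

end Aux

/-- **Discrete idempotents force refinement of the compact-open topology.**
Let `M` be a topological inverse monoid whose idempotents form a Boolean algebra (natural
order, top `1`, absorbing bottom `0`), and suppose that the set of idempotents is a discrete
subspace of `M`.  Then the topology of `M` refines the compact-open topology: all the
sub-basic sets `V_{e,f}`, `V*_{e,f}`, `V_{e,#}`, `V_{#,e}` are open in `M`. -/
theorem topology_refines_compactOpen_of_discrete_idempotents {M : Type*} [InverseMonoid M]
    [TopologicalSpace M]
    (hmul : Continuous (fun p : M × M => p.1 * p.2))
    (hstar : Continuous (star : M → M))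
    [BooleanAlgebra (Idem M)]
    (horder : ∀ e f : Idem M, e ≤ f ↔ (e : M) * f = e)
    (htop : ((⊤ : Idem M) : M) = 1)
    (hbot : ∀ m : M, ((⊥ : Idem M) : M) * m = ((⊥ : Idem M) : M) ∧
      m * ((⊥ : Idem M) : M) = ((⊥ : Idem M) : M))
    (hdisc : DiscreteTopology (Idem M)) :
    ∀ e f : M, IsIdempotentElem e → IsIdempotentElem f →
      IsOpen (Vef e f) ∧ IsOpen (VefStar e f) ∧
      IsOpen (Vsharp (((⊥ : Idem M) : M)) e) ∧ IsOpen (sharpV (((⊥ : Idem M) : M)) e) := by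
  haveI := hdisc
  intro e f he hf
  -- continuity building blocks
  have cid : Continuous (fun m : M => m) := continuous_id
  have csm : Continuous fun m : M => star m * m := hmul.comp (hstar.prodMk cid)
  have cms : Continuous fun m : M => m * star m := hmul.comp (cid.prodMk hstar)
  have c1 : Continuous fun m : M => e * (star m * m) :=
    hmul.comp (continuous_const.prodMk csm)
  have c1' : Continuous fun m : M => e * (m * star m) :=
    hmul.comp (continuous_const.prodMk cms)
  have cme : Continuous fun m : M => m * e := hmul.comp (cid.prodMk continuous_const)
  have c2 : Continuous fun m : M => m * e * star m := hmul.comp (cme.prodMk hstar)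
  have cse : Continuous fun m : M => star m * e :=
    hmul.comp (hstar.prodMk continuous_const)
  have c2' : Continuous fun m : M => star m * e * m := hmul.comp (cse.prodMk cid)
  -- idempotency of the relevant functions
  have i1 : ∀ m : M, IsIdempotentElem (e * (star m * m)) := fun m =>
    IM.idem_mul he (IM.idem_star_mul m)
  have i1' : ∀ m : M, IsIdempotentElem (e * (m * star m)) := fun m =>
    IM.idem_mul he (IM.idem_mul_star m)
  have i2 : ∀ m : M, IsIdempotentElem (m * e * star m) := fun m => IM.idem_sandwich he m
  have i2' : ∀ m : M, IsIdempotentElem (star m * e * m) := fun m => by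
    have := IM.idem_sandwich he (star m)
    rwa [IM.star_star m] at this
  refine ⟨?_, ?_, ?_, ?_⟩
  · have hA : IsOpen {m : M | (⟨e * (star m * m), i1 m⟩ : Idem M) ∈
        {x : Idem M | (x : M) = e}} := IM.isOpen_pre _ c1 i1 _
    have hB : IsOpen {m : M | (⟨m * e * star m, i2 m⟩ : Idem M) ∈
        {x : Idem M | (x : M) * f = x}} := IM.isOpen_pre _ c2 i2 _
    exact hA.inter hB
  · have hA : IsOpen {m : M | (⟨e * (m * star m), i1' m⟩ : Idem M) ∈
        {x : Idem M | (x : M) = e}} := IM.isOpen_pre _ c1' i1' _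
    have hB : IsOpen {m : M | (⟨star m * e * m, i2' m⟩ : Idem M) ∈
        {x : Idem M | (x : M) * f = x}} := IM.isOpen_pre _ c2' i2' _
    exact hA.inter hB
  · exact IM.isOpen_pre _ c1 i1 {x : Idem M | (x : M) = ((⊥ : Idem M) : M)}
  · exact IM.isOpen_pre _ c1' i1' {x : Idem M | (x : M) = ((⊥ : Idem M) : M)}
end

section
/- Let M be a topological inverse monoid such that for every idempotent e ∈ E(M), right-multiplication by e is an open map M → Me. Then right-multiplication by m is an open map M → Mm for every m ∈ M. -/
/-- **Right multiplication by arbitrary elements is open.**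
Let `M` be a topological inverse monoid such that for every idempotent `e`, right
multiplication by `e` is an open map onto the subspace `Me`.  Then right multiplication by
`m` is an open map onto the subspace `Mm`, for every `m ∈ M`.  (Openness of a map onto the
subspace `Mm = range (· * m)` is expressed by: the image of any open set is the trace on
`Mm` of an open subset of `M`.) -/
theorem mul_right_isOpenMap {M : Type*} [InverseMonoid M] [TopologicalSpace M]
    (hmul : Continuous (fun p : M × M => p.1 * p.2))
    (hstar : Continuous (star : M → M))
    (h : ∀ e : M, IsIdempotentElem e → ∀ U : Set M, IsOpen U →
      ∃ W : Set M, IsOpen W ∧ W ∩ Set.range (· * e) = (· * e) '' U)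
    (m : M) (U : Set M) (hU : IsOpen U) :
    ∃ W : Set M, IsOpen W ∧ W ∩ Set.range (· * m) = (· * m) '' U := by
  have he1 : m * star m * m = m := InverseMonoid.mul_star_mul_self m
  have hidem : IsIdempotentElem (m * star m) := by
    show m * star m * (m * star m) = m * star m
    rw [← mul_assoc, he1]
  obtain ⟨W, hW, hWe⟩ := h (m * star m) hidem U hU
  refine ⟨(fun x => x * star m) ⁻¹' W, hW.preimage
    (hmul.comp (continuous_id.prodMk continuous_const)), ?_⟩
  ext x
  constructor
  · rintro ⟨hxW, a, rfl⟩
    have hmem : a * m * star m ∈ W ∩ Set.range (· * (m * star m)) :=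
      ⟨hxW, a, by simp [mul_assoc]⟩
    rw [hWe] at hmem
    obtain ⟨u, hu, huu⟩ := hmem
    refine ⟨u, hu, ?_⟩
    have huu' : u * (m * star m) = a * m * star m := huu
    have : u * (m * star m) * m = a * m * star m * m := by rw [huu']
    simpa [mul_assoc, he1] using this
  · rintro ⟨u, hu, rfl⟩
    refine ⟨?_, u, rfl⟩
    have : u * m * star m ∈ (· * (m * star m)) '' U := ⟨u, hu, by simp [mul_assoc]⟩
    rw [← hWe] at this
    exact this.1
end

section
/- Let M be a topological group and X a compact zero-dimensional space with M ≤ Homeo(X) a subgroup with group topology. Then M is locally decomposable in the sense of inverse monoids (all restriction maps ρ_P : M → ∏_{e ∈ P} Me, m ↦ (me)_{e∈P}, for finite clopen partitions P are open) if and only if for every clopen partition P of X, the subgroup generated by the rigid stabilisers rist_M(e) for e ∈ P is open in M and carries the product topology. -/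
variable {X : Type*} [TopologicalSpace X]

/-- The restriction map of elements of `M` to the subset `α`, landing in functions `α → X`;
its range, with the coinduced (quotient) topology, is the space `Mα` of restrictions. -/
def resQ (M : Subgroup (X ≃ₜ X)) (α : Set X) : M → (α → X) :=
  fun g x => (g : X ≃ₜ X) x

/-- The rigid stabiliser of `Y` in `M`, as a subgroup of `M`. -/
def ristIn (M : Subgroup (X ≃ₜ X)) (Y : Set X) : Subgroup M where
  carrier := {g | ∀ x ∉ Y, (g : X ≃ₜ X) x = x}
  one_mem' := fun _ _ => rfl
  mul_mem' := fun {a b} ha hb x hx => by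
    show (a : X ≃ₜ X) ((b : X ≃ₜ X) x) = x
    rw [hb x hx, ha x hx]
  inv_mem' := fun {a} ha x hx => by
    show (a : X ≃ₜ X).symm x = x
    conv_lhs => rw [← ha x hx]
    exact (a : X ≃ₜ X).symm_apply_apply x

/-!
For a partition `α`, the product map `p : ∏ᵢ rist_M(αᵢ) → M` is an injective continuous
homomorphism with `p(f) = fᵢ` on `αᵢ`, and each restriction map `ρᵢ : M → Mαᵢ` is open, since
the saturation of an open set is a union of its right translates by `rist_M(αᵢᶜ)`.
If `ρ` is open, an `h` close to `1` is cut into pieces `wᵢ ∈ rist_M(αᵢ)`, agreeing with `h` on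
`αᵢ`, each close to `1` because `ρ(wᵢ)` is close to `ρ(1)`; then `p(w) = h`, so `p` is open.
Conversely, if `p` is open then `ρ(O) ⊇ ∏ᵢ ρᵢ(g · p(Uᵢ-cylinder))` around `ρ(g)`. Finally, the
open subgroup `p(rist_M(a) × rist_M(aᶜ))` preserves the clopen `a`, and a clopen `Z` between
`g(K)` and `U` yields continuity into the compact-open topology.
-/

open Set Function Filter Topology

lemma Matrix.pairwise_disjoint_vecCons_compl {α : Type*} (a : Set α) :
    Pairwise (Disjoint on ![a, aᶜ]) := by
  intro i j hij
  fin_cases i <;> fin_cases j <;> simp_all [onFun, disjoint_compl_left, disjoint_compl_right]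

lemma Matrix.iUnion_vecCons_compl {α : Type*} (a : Set α) : ⋃ i, ![a, aᶜ] i = univ := by
  ext x
  simp [Fin.exists_fin_two, em]

section

variable {M : Subgroup (X ≃ₜ X)} {n : ℕ} {α : Fin n → Set X}

lemma apply_mem_of_mem_ristIn {s : Set X} {g : M} (hg : g ∈ ristIn M s) {x : X} (hx : x ∈ s) :
    (g : X ≃ₜ X) x ∈ s := by
  by_contra h
  have hfix : (g : X ≃ₜ X).symm ((g : X ≃ₜ X) x) = (g : X ≃ₜ X) x := (ristIn M s).inv_mem hg _ h
  rw [Homeomorph.symm_apply_apply] at hfix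
  exact h (hfix ▸ hx)

lemma eq_of_eqOn_of_iUnion_eq_univ (hcover : ⋃ i, α i = univ) {g h : M}
    (hgh : ∀ i, EqOn (g : X ≃ₜ X) (h : X ≃ₜ X) (α i)) : g = h := by
  refine Subtype.ext (Homeomorph.ext fun x => ?_)
  obtain ⟨i, hi⟩ := mem_iUnion.1 (hcover ▸ mem_univ x)
  exact hgh i hi

lemma prod_ofFn_ristIn_apply_of_mem :
    ∀ {n : ℕ} {α : Fin n → Set X}, Pairwise (Disjoint on α) →
      ∀ (f : ∀ i, ristIn M (α i)) (i : Fin n) {x : X}, x ∈ α i →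
      (((List.ofFn fun j => (f j : M)).prod : M) : X ≃ₜ X) x = ((f i : M) : X ≃ₜ X) x
  | 0, _, _, _, i, _, _ => i.elim0
  | n + 1, α, hdisj, f, i, x, hx => by
    have hdisj' : Pairwise (Disjoint on (α ∘ Fin.succ)) :=
      fun _ _ hjk => hdisj ((Fin.succ_injective n).ne hjk)
    rw [List.ofFn_succ, List.prod_cons]
    change ((f 0 : M) : X ≃ₜ X) ((((List.ofFn fun j : Fin n => (f j.succ : M)).prod : M)
      : X ≃ₜ X) x) = _
    rcases Fin.eq_zero_or_eq_succ i with rfl | ⟨j, rfl⟩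
    · congr 1
      refine List.prod_induction (fun g : M => (g : X ≃ₜ X) x = x) (fun a b ha hb => ?_) rfl ?_
      · change (a : X ≃ₜ X) ((b : X ≃ₜ X) x) = x
        rw [hb, ha]
      · simp only [List.mem_ofFn, forall_exists_index, forall_apply_eq_imp_iff]
        exact fun k => (f k.succ).2 x (disjoint_left.1 (hdisj (Fin.succ_ne_zero k).symm) hx)
    · rw [prod_ofFn_ristIn_apply_of_mem hdisj' (fun k => f k.succ) j hx]
      exact (f 0).2 _ (disjoint_left.1 (hdisj (Fin.succ_ne_zero j))
        (apply_mem_of_mem_ristIn (f j.succ).2 hx))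

def ristProd (M : Subgroup (X ≃ₜ X)) (hdisj : Pairwise (Disjoint on α))
    (hcover : ⋃ i, α i = univ) : (∀ i, ristIn M (α i)) →* M where
  toFun f := (List.ofFn fun i => (f i : M)).prod
  map_one' := List.prod_eq_one (by simp)
  map_mul' f g := eq_of_eqOn_of_iUnion_eq_univ hcover fun i x hx => by
    change _ = (((List.ofFn fun i => (f i : M)).prod : M) : X ≃ₜ X)
      ((((List.ofFn fun i => (g i : M)).prod : M) : X ≃ₜ X) x)
    rw [prod_ofFn_ristIn_apply_of_mem hdisj _ i hx, prod_ofFn_ristIn_apply_of_mem hdisj g i hx,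
      prod_ofFn_ristIn_apply_of_mem hdisj f i (apply_mem_of_mem_ristIn (g i).2 hx)]
    rfl

variable {hdisj : Pairwise (Disjoint on α)} {hcover : ⋃ i, α i = univ}

lemma ristProd_apply_of_mem (f : ∀ i, ristIn M (α i)) {i : Fin n} {x : X} (hx : x ∈ α i) :
    (ristProd M hdisj hcover f : X ≃ₜ X) x = ((f i : M) : X ≃ₜ X) x :=
  prod_ofFn_ristIn_apply_of_mem hdisj f i hx

lemma ristProd_injective (hdisj : Pairwise (Disjoint on α)) (hcover : ⋃ i, α i = univ) :
    Injective (ristProd M hdisj hcover) := by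
  intro f g hfg
  funext i
  refine Subtype.ext (Subtype.ext (Homeomorph.ext fun x => ?_))
  by_cases hx : x ∈ α i
  · have hfgx := congrArg (fun m : M => (m : X ≃ₜ X) x) hfg
    rwa [ristProd_apply_of_mem f hx, ristProd_apply_of_mem g hx] at hfgx
  · rw [(f i).2 x hx, (g i).2 x hx]

lemma continuous_ristProd [TopologicalSpace M] [IsTopologicalGroup M]
    (hdisj : Pairwise (Disjoint on α)) (hcover : ⋃ i, α i = univ) :
    Continuous (ristProd M hdisj hcover) := by
  change Continuous fun f : ∀ i, ristIn M (α i) => (List.ofFn fun i => (f i : M)).prod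
  simp_rw [List.ofFn_eq_map]
  exact continuous_list_prod _ fun i _ => continuous_subtype_val.comp (continuous_apply i)

end

section Restriction

variable {M : Subgroup (X ≃ₜ X)}

/-- The quotient topology of the space `Mα` of restrictions. -/
abbrev restrictionTopology (M : Subgroup (X ≃ₜ X)) [TopologicalSpace M] (s : Set X) :
    TopologicalSpace (range (resQ M s)) :=
  .coinduced (rangeFactorization (resQ M s)) inferInstance

lemma rangeFactorization_resQ_eq_iff {s : Set X} {g h : M} :
    rangeFactorization (resQ M s) g = rangeFactorization (resQ M s) h ↔
      EqOn (g : X ≃ₜ X) (h : X ≃ₜ X) s := by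
  rw [Subtype.ext_iff, funext_iff, Subtype.forall]
  rfl

lemma isOpenMap_rangeFactorization_resQ [TopologicalSpace M] [IsTopologicalGroup M]
    (s : Set X) :
    @IsOpenMap _ _ _ (restrictionTopology M s) (rangeFactorization (resQ M s)) := by
  intro A hA
  rw [isOpen_coinduced]
  have hsat : rangeFactorization (resQ M s) ⁻¹' (rangeFactorization (resQ M s) '' A) =
      ⋃ t ∈ ristIn M sᶜ, (· * t) ⁻¹' A := by
    ext h
    simp only [mem_preimage, mem_image, mem_iUnion, rangeFactorization_resQ_eq_iff]
    constructor
    · rintro ⟨a, ha, hah⟩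
      refine ⟨h⁻¹ * a, fun x hx => ?_, by rwa [mul_inv_cancel_left]⟩
      rw [notMem_compl_iff] at hx
      change (h : X ≃ₜ X).symm ((a : X ≃ₜ X) x) = x
      rw [hah hx, Homeomorph.symm_apply_apply]
    · rintro ⟨t, ht, hA⟩
      refine ⟨h * t, hA, fun x hx => ?_⟩
      exact congrArg (h : X ≃ₜ X) (ht x (notMem_compl_iff.2 hx))
  rw [hsat]
  exact isOpen_biUnion fun t _ => hA.preimage (continuous_mul_const t)

variable {n : ℕ} {α : Fin n → Set X} {hdisj : Pairwise (Disjoint on α)}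
  {hcover : ⋃ i, α i = univ}

lemma rangeFactorization_mul_ristProd (g : M) (f : ∀ i, ristIn M (α i)) (i : Fin n) :
    rangeFactorization (resQ M (α i)) (g * ristProd M hdisj hcover f) =
      rangeFactorization (resQ M (α i)) (g * f i) :=
  rangeFactorization_resQ_eq_iff.2 fun _ hx =>
    congrArg (g : X ≃ₜ X) (ristProd_apply_of_mem f hx)

lemma exists_mem_ristIn_eqOn_of_update_mem_image (hcover : ⋃ i, α i = univ) {W : Set M}
    {i : Fin n} {h : M}
    (hmem : update (fun j => rangeFactorization (resQ M (α j)) 1) i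
      (rangeFactorization (resQ M (α i)) h) ∈
        (fun (g : M) j => rangeFactorization (resQ M (α j)) g) '' W) :
    ∃ w ∈ W, w ∈ ristIn M (α i) ∧ EqOn (w : X ≃ₜ X) (h : X ≃ₜ X) (α i) := by
  obtain ⟨w, hw, hwρ⟩ := hmem
  refine ⟨w, hw, fun x hx => ?_, ?_⟩
  · obtain ⟨j, hj⟩ := mem_iUnion.1 (hcover ▸ mem_univ x)
    have hji : j ≠ i := by rintro rfl; exact hx hj
    have hwj := congrFun hwρ j
    rw [update_of_ne hji, rangeFactorization_resQ_eq_iff] at hwj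
    exact hwj hj
  · have hwi := congrFun hwρ i
    rwa [update_self, rangeFactorization_resQ_eq_iff] at hwi

variable [TopologicalSpace M]

theorem mapsTo_mem_nhds_one_of_isOpenMap_ristProd (hdisj : Pairwise (Disjoint on α))
    (hcover : ⋃ i, α i = univ) (hp : IsOpenMap (ristProd M hdisj hcover))
    (i : Fin n) : {m : M | MapsTo (m : X ≃ₜ X) (α i) (α i)} ∈ 𝓝 1 := by
  refine mem_of_superset (hp.isOpen_range.mem_nhds ⟨1, map_one _⟩) ?_
  rintro _ ⟨f, rfl⟩ x hx
  rw [ristProd_apply_of_mem f hx]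
  exact apply_mem_of_mem_ristIn (f i).2 hx

variable [IsTopologicalGroup M]

theorem isOpenMap_ristProd_of_isOpenMap_restrict (hdisj : Pairwise (Disjoint on α))
    (hcover : ⋃ i, α i = univ)
    (hρ : letI := fun i => restrictionTopology M (α i)
      IsOpenMap fun (g : M) i => rangeFactorization (resQ M (α i)) g) :
    IsOpenMap (ristProd M hdisj hcover) := by
  classical
  let _ := fun i => restrictionTopology M (α i)
  set ρ : M → ∀ i, range (resQ M (α i)) := fun g i => rangeFactorization (resQ M (α i)) g
  refine IsTopologicalGroup.isOpenMap_iff_nhds_one.2 (le_map fun B hB => ?_)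
  rw [nhds_pi, Filter.mem_pi] at hB
  obtain ⟨I, -, t, ht, htB⟩ := hB
  choose W hW hWt using fun i => (mem_nhds_subtype _ _ _).1 (ht i)
  have hρW : ρ '' ⋂ i, W i ∈ 𝓝 (ρ 1) := hρ.image_mem_nhds (iInter_mem.2 hW)
  rw [nhds_pi, Filter.mem_pi] at hρW
  obtain ⟨J, -, T, hT, hTW⟩ := hρW
  have hnhds : ⋂ i, rangeFactorization (resQ M (α i)) ⁻¹' T i ∈ 𝓝 1 :=
    iInter_mem.2 fun i => continuous_coinduced_rng.continuousAt.preimage_mem_nhds (hT i)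
  refine mem_of_superset hnhds fun h hh => ?_
  have hpieces : ∀ i, ∃ w ∈ ⋂ j, W j, w ∈ ristIn M (α i) ∧
      EqOn (w : X ≃ₜ X) (h : X ≃ₜ X) (α i) := by
    refine fun i => exists_mem_ristIn_eqOn_of_update_mem_image hcover (hTW fun j _ => ?_)
    rcases eq_or_ne j i with rfl | hji
    · simpa only [update_self, mem_preimage] using mem_iInter.1 hh j
    · simpa only [update_of_ne hji] using mem_of_mem_nhds (hT j)
  choose w hwW hwrist hwh using hpieces
  refine ⟨fun i => ⟨w i, hwrist i⟩, htB fun i _ => hWt i (mem_iInter.1 (hwW i) i), ?_⟩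
  exact eq_of_eqOn_of_iUnion_eq_univ hcover fun i x hx =>
    (ristProd_apply_of_mem _ hx).trans (hwh i hx)

theorem isOpenMap_restrict_of_isOpenMap_ristProd (hdisj : Pairwise (Disjoint on α))
    (hcover : ⋃ i, α i = univ) (hp : IsOpenMap (ristProd M hdisj hcover)) :
    letI := fun i => restrictionTopology M (α i)
    IsOpenMap fun (g : M) i => rangeFactorization (resQ M (α i)) g := by
  let _ := fun i => restrictionTopology M (α i)
  refine IsOpenMap.of_nhds_le fun g => le_map fun O hO => ?_
  set q : (∀ i, ristIn M (α i)) → M := fun f => g * ristProd M hdisj hcover f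
  have hq1 : q 1 = g := by simp [q]
  have hqc : Continuous q := continuous_const.mul (continuous_ristProd hdisj hcover)
  have hqo : IsOpenMap q := (isOpenMap_mul_left g).comp hp
  have hD : q ⁻¹' O ∈ 𝓝 1 := hqc.continuousAt.preimage_mem_nhds (by rwa [hq1])
  rw [nhds_pi, Filter.mem_pi] at hD
  obtain ⟨I, -, u, hu, huD⟩ := hD
  have hA : ∀ i, q '' (eval i ⁻¹' u i) ∈ 𝓝 g := fun i => by
    rw [← hq1]
    exact hqo.image_mem_nhds ((continuous_apply i).continuousAt.preimage_mem_nhds (hu i))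
  refine mem_of_superset (set_pi_mem_nhds finite_univ fun i _ =>
    (isOpenMap_rangeFactorization_resQ (α i)).image_mem_nhds (hA i)) fun s hs => ?_
  have hpick : ∀ i, ∃ f : ∀ j, ristIn M (α j), f i ∈ u i ∧
      rangeFactorization (resQ M (α i)) (q f) = s i := fun i => by
    obtain ⟨_, ⟨f, hf, rfl⟩, hfs⟩ := hs i (mem_univ i)
    exact ⟨f, hf, hfs⟩
  choose v hv hvs using hpick
  refine ⟨q fun i => v i i, huD fun i _ => hv i, funext fun i => ?_⟩
  exact (rangeFactorization_mul_ristProd g _ i).trans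
    ((rangeFactorization_mul_ristProd g (v i) i).symm.trans (hvs i))

end Restriction

theorem continuous_toContinuousMap_of_mapsTo_mem_nhds_one
    [CompactSpace X] [T2Space X] [TotallyDisconnectedSpace X]
    {M : Subgroup (X ≃ₜ X)} [TopologicalSpace M] [IsTopologicalGroup M]
    (hM : ∀ a : Set X, IsClopen a → {m : M | MapsTo (m : X ≃ₜ X) a a} ∈ 𝓝 1) :
    Continuous fun g : M => (⟨⇑(g : X ≃ₜ X), (g : X ≃ₜ X).continuous⟩ : C(X, X)) := by
  refine ContinuousMap.continuous_compactOpen.2 fun K hK U hU =>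
    isOpen_iff_mem_nhds.2 fun g hg => ?_
  obtain ⟨Z, hZ, hKZ, hZU⟩ := exists_clopen_of_closed_subset_open
    (hK.image (g : X ≃ₜ X).continuous).isClosed hU hg.image_subset
  rw [← map_mul_left_nhds_one]
  refine mem_map.2 <| mem_of_superset (hM _ (hZ.preimage (g : X ≃ₜ X).continuous)) fun m hm x hx =>
    hZU (hm (hKZ (mem_image_of_mem _ hx)))

/-- **Local decomposability: inverse monoid sense versus group sense.**
Let `X` be a compact zero-dimensional space and `M ≤ Homeo(X)` a subgroup with a group
topology.  Then `M` is locally decomposable in the sense of inverse monoids (its topology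
refines the compact-open topology and, for every finite clopen partition
`α : Fin n → Set X`, the restriction map `ρ : M → ∏ᵢ Mαᵢ`, `g ↦ (g|αᵢ)ᵢ` is open with
respect to the quotient topologies on the spaces of restrictions `Mαᵢ`) if and only if for
every finite clopen partition the multiplication map from the direct product of the rigid
stabilisers `∏ᵢ rist_M(αᵢ)` to `M` is an injective continuous open map (so that the subgroup
they generate is open in `M` and carries the product topology). -/
theorem locallyDecomposable_monoid_iff_group
    [CompactSpace X] [T2Space X] [TotallyDisconnectedSpace X]
    (M : Subgroup (X ≃ₜ X)) [TopologicalSpace M] [IsTopologicalGroup M] :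
    ((Continuous fun g : M => (⟨⇑(g : X ≃ₜ X), (g : X ≃ₜ X).continuous⟩ : C(X, X))) ∧
     (Continuous fun g : M =>
        (⟨⇑((g : X ≃ₜ X).symm), (g : X ≃ₜ X).symm.continuous⟩ : C(X, X))) ∧
     (∀ (n : ℕ) (α : Fin n → Set X), (∀ i, IsClopen (α i)) →
       Pairwise (Function.onFun Disjoint α) → (⋃ i, α i) = Set.univ →
       letI : ∀ i, TopologicalSpace ↥(Set.range (resQ M (α i))) := fun i =>
         TopologicalSpace.coinduced (Set.rangeFactorization (resQ M (α i))) inferInstance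
       IsOpenMap fun (g : M) (i : Fin n) => Set.rangeFactorization (resQ M (α i)) g))
    ↔
    (∀ (n : ℕ) (α : Fin n → Set X), (∀ i, IsClopen (α i)) →
      Pairwise (Function.onFun Disjoint α) → (⋃ i, α i) = Set.univ →
      Function.Injective
        (fun f : (∀ i, ristIn M (α i)) => (List.ofFn fun i => ((f i : M))).prod) ∧
      Continuous
        (fun f : (∀ i, ristIn M (α i)) => (List.ofFn fun i => ((f i : M))).prod) ∧
      IsOpenMap
        (fun f : (∀ i, ristIn M (α i)) => (List.ofFn fun i => ((f i : M))).prod)) := by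
  constructor
  · rintro ⟨-, -, hρ⟩ n α hclo hdisj hcover
    exact ⟨ristProd_injective hdisj hcover, continuous_ristProd hdisj hcover,
      isOpenMap_ristProd_of_isOpenMap_restrict hdisj hcover (hρ n α hclo hdisj hcover)⟩
  · intro hR
    have hcont := continuous_toContinuousMap_of_mapsTo_mem_nhds_one fun a ha => by
      have hdisj := Matrix.pairwise_disjoint_vecCons_compl a
      have hcover := Matrix.iUnion_vecCons_compl a
      exact mapsTo_mem_nhds_one_of_isOpenMap_ristProd hdisj hcover
        (hR 2 _ (Fin.forall_fin_two.2 ⟨ha, ha.compl⟩) hdisj hcover).2.2 0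
    exact ⟨hcont, hcont.comp continuous_inv, fun n α hclo hdisj hcover =>
      isOpenMap_restrict_of_isOpenMap_ristProd hdisj hcover (hR n α hclo hdisj hcover).2.2⟩
end

section
/- Every compact zero-dimensional G-space X is an inverse limit of expansive G-spaces. Specifically, for each clopen partition P of X, the map φ_P : X → P^G, φ_P(x)(g) = the part of P containing g(x), is continuous and G-equivariant, the images φ_P(X) are subshifts, and X is the inverse limit of the system (φ_P(X)) over all clopen partitions P ordered by refinement. -/
/-! Each `φ_P` is locally constant because the parts of `P` are clopen. In a compact Hausdorff
totally disconnected space two points are separated by a clopen set `U`, hence by the partition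
`{U, Uᶜ}`. A compatible thread `F` gives, for every partition `P`, the nonempty closed set of
points `x` with `g • x ∈ F P g` for all `g`; these sets are directed because any two clopen
partitions have a common refinement, so by compactness they share a point, which is the limit
of the thread. -/

variable {X : Type*} [TopologicalSpace X]

/-- A partition of `X` into nonempty clopen sets. -/
def IsClopenPartition (P : Set (Set X)) : Prop :=
  (∀ A ∈ P, IsClopen A ∧ A.Nonempty) ∧ P.PairwiseDisjoint id ∧ ⋃₀ P = Set.univ

/-- The part of the covering family `P` containing `y` (chosen via choice). -/
noncomputable def partOf (P : Set (Set X)) (hP : ⋃₀ P = Set.univ) (y : X) : P := by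
  have hy : y ∈ ⋃₀ P := by rw [hP]; trivial
  exact ⟨(Set.mem_sUnion.mp hy).choose, (Set.mem_sUnion.mp hy).choose_spec.1⟩

/-- The map `φ_P : X → P^G`, `φ_P(x)(g) = ` the part of `P` containing `g • x`. -/
noncomputable def Phi {G : Type*} [Group G] [MulAction G X]
    (P : Set (Set X)) (hP : ⋃₀ P = Set.univ) (x : X) : G → P :=
  fun g => partOf P hP (g • x)

section Partition

variable {α : Type*}

lemma mem_partOf (P : Set (Set α)) (hP : ⋃₀ P = Set.univ) (y : α) :
    y ∈ (partOf P hP y : Set α) := by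
  have hy : y ∈ ⋃₀ P := by rw [hP]; trivial
  exact (Set.mem_sUnion.mp hy).choose_spec.2

lemma partOf_eq_of_mem {P : Set (Set α)} (hd : P.PairwiseDisjoint id) (hP : ⋃₀ P = Set.univ)
    {A : Set α} (hA : A ∈ P) {y : α} (hy : y ∈ A) : (partOf P hP y : Set α) = A :=
  hd.elim_set (partOf P hP y).2 hA y (mem_partOf P hP y) hy

lemma partOf_preimage_singleton {P : Set (Set α)} (hd : P.PairwiseDisjoint id)
    (hP : ⋃₀ P = Set.univ) (A : P) : partOf P hP ⁻¹' {A} = A := by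
  ext y
  exact ⟨fun hy => hy ▸ mem_partOf P hP y, fun hy => Subtype.ext (partOf_eq_of_mem hd hP A.2 hy)⟩

lemma exists_partOf_eq_comp_of_refines {P Q : Set (Set α)} (hd : P.PairwiseDisjoint id)
    (hP : ⋃₀ P = Set.univ) (hQ : ⋃₀ Q = Set.univ) (href : ∀ B ∈ Q, ∃ A ∈ P, B ⊆ A) :
    ∃ θ : Q → P, (∀ B : Q, (B : Set α) ⊆ (θ B : Set α)) ∧
      ∀ y, partOf P hP y = θ (partOf Q hQ y) := by
  choose θ hθP hθ using href
  exact ⟨fun B => ⟨θ B B.2, hθP B B.2⟩, fun B => hθ B B.2, fun y =>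
    Subtype.ext (partOf_eq_of_mem hd hP (hθP _ _) (hθ _ _ (mem_partOf Q hQ y)))⟩

variable {G : Type*} [Group G] [MulAction G α]

lemma smul_mem_Phi (P : Set (Set α)) (hP : ⋃₀ P = Set.univ) (x : α) (g : G) :
    g • x ∈ (Phi P hP x g : Set α) :=
  mem_partOf P hP (g • x)

lemma Phi_smul (P : Set (Set α)) (hP : ⋃₀ P = Set.univ) (h : G) (x : α) (g : G) :
    Phi P hP (h • x) g = Phi P hP x (g * h) :=
  congrArg (partOf P hP) (mul_smul g h x).symm

lemma shift_mem_range_Phi (P : Set (Set α)) (hP : ⋃₀ P = Set.univ) (h : G) {f : G → P}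
    (hf : f ∈ Set.range (Phi (G := G) P hP)) :
    (fun g => f (g * h)) ∈ Set.range (Phi (G := G) P hP) := by
  obtain ⟨x, rfl⟩ := hf
  exact ⟨h • x, funext (Phi_smul P hP h x)⟩

lemma Phi_ne_of_mem_of_notMem {P : Set (Set α)} (hd : P.PairwiseDisjoint id)
    (hP : ⋃₀ P = Set.univ) {A : Set α} (hA : A ∈ P) {x y : α} (hx : x ∈ A) (hy : y ∉ A) :
    Phi (G := G) P hP x ≠ Phi (G := G) P hP y := by
  intro h
  have hx1 : (Phi P hP x (1 : G) : Set α) = A := partOf_eq_of_mem hd hP hA (by rwa [one_smul])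
  have hy1 := smul_mem_Phi P hP y (1 : G)
  rw [← h, hx1, one_smul] at hy1
  exact hy hy1

end Partition

section ClopenPartition

-- Removing `∅` keeps `{univ}` a partition (into nonempty parts) also when `X` is empty.
lemma exists_isClopenPartition : ∃ P : Set (Set X), IsClopenPartition P := by
  refine ⟨{Set.univ} \ {∅}, ?_, (Set.subsingleton_singleton.anti Set.sdiff_subset).pairwise _, ?_⟩
  · rintro _ ⟨rfl, hne⟩
    exact ⟨isClopen_univ, Set.nonempty_iff_ne_empty.2 hne⟩
  · rw [Set.sUnion_sdiff_singleton_empty, Set.sUnion_singleton]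

lemma IsClopenPartition.pair {U : Set X} (hU : IsClopen U) (hne : U.Nonempty)
    (hne' : Uᶜ.Nonempty) : IsClopenPartition ({U, Uᶜ} : Set (Set X)) := by
  refine ⟨?_, Set.pairwiseDisjoint_insert.2 ⟨Set.pairwiseDisjoint_singleton _ _, ?_⟩, ?_⟩
  · rintro A (rfl | rfl)
    exacts [⟨hU, hne⟩, ⟨hU.compl, hne'⟩]
  · rintro _ rfl -
    exact disjoint_compl_right
  · rw [Set.sUnion_pair, Set.union_compl_self]

lemma IsClopenPartition.exists_common_refinement {P Q : Set (Set X)} (hP : IsClopenPartition P)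
    (hQ : IsClopenPartition Q) :
    ∃ R : Set (Set X), IsClopenPartition R ∧ (∀ C ∈ R, ∃ A ∈ P, C ⊆ A) ∧
      ∀ C ∈ R, ∃ B ∈ Q, C ⊆ B := by
  refine ⟨Set.image2 (· ∩ ·) P Q \ {∅}, ⟨?_, ?_, ?_⟩, ?_, ?_⟩
  · rintro _ ⟨⟨A, hA, B, hB, rfl⟩, hne⟩
    exact ⟨(hP.1 A hA).1.inter (hQ.1 B hB).1, Set.nonempty_iff_ne_empty.2 hne⟩
  · rintro _ ⟨⟨A, hA, B, hB, rfl⟩, -⟩ _ ⟨⟨A', hA', B', hB', rfl⟩, -⟩ hne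
    refine Set.disjoint_left.2 fun y hy hy' => hne ?_
    rw [hP.2.1.elim_set hA hA' y hy.1 hy'.1, hQ.2.1.elim_set hB hB' y hy.2 hy'.2]
  · refine Set.sUnion_eq_univ_iff.2 fun y => ?_
    obtain ⟨A, hA, hyA⟩ := Set.sUnion_eq_univ_iff.1 hP.2.2 y
    obtain ⟨B, hB, hyB⟩ := Set.sUnion_eq_univ_iff.1 hQ.2.2 y
    exact ⟨A ∩ B, ⟨⟨A, hA, B, hB, rfl⟩, Set.nonempty_iff_ne_empty.1 ⟨y, hyA, hyB⟩⟩, hyA, hyB⟩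
  · rintro _ ⟨⟨A, hA, B, -, rfl⟩, -⟩
    exact ⟨A, hA, Set.inter_subset_left⟩
  · rintro _ ⟨⟨A, -, B, hB, rfl⟩, -⟩
    exact ⟨B, hB, Set.inter_subset_right⟩

lemma IsClopenPartition.isLocallyConstant_partOf {P : Set (Set X)} (hP : IsClopenPartition P) :
    IsLocallyConstant (partOf P hP.2.2) :=
  IsLocallyConstant.iff_isOpen_fiber.2 fun A => by
    rw [partOf_preimage_singleton hP.2.1]
    exact (hP.1 A A.2).1.isOpen

variable {G : Type*} [Group G] [MulAction G X]

lemma exists_isClopenPartition_Phi_ne [TotallySeparatedSpace X] {x y : X} (hxy : x ≠ y) :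
    ∃ (P : Set (Set X)) (hP : IsClopenPartition P),
      Phi (G := G) P hP.2.2 x ≠ Phi (G := G) P hP.2.2 y := by
  obtain ⟨U, hU, hxU, hyU⟩ := exists_isClopen_of_totally_separated hxy
  have hP := IsClopenPartition.pair hU ⟨x, hxU⟩ ⟨y, hyU⟩
  exact ⟨_, hP, Phi_ne_of_mem_of_notMem hP.2.1 hP.2.2 (Set.mem_insert U _) hxU hyU⟩

/-- The conditions attached to a common refinement imply those of both partitions, so the sets
they cut out form a directed family and Cantor's intersection theorem applies. -/
lemma exists_forall_smul_mem_of_compatible [CompactSpace X]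
    (hc : ∀ g : G, Continuous fun x : X => g • x)
    (F : ∀ P : Set (Set X), IsClopenPartition P → G → Set X)
    (hclosed : ∀ P hP g, IsClosed (F P hP g)) (hne : ∀ P hP, ∃ x : X, ∀ g, g • x ∈ F P hP g)
    (hmono : ∀ (P P' : Set (Set X)) (hP : IsClopenPartition P) (hP' : IsClopenPartition P'),
      (∀ B ∈ P', ∃ A ∈ P, B ⊆ A) → ∀ g : G, F P' hP' g ⊆ F P hP g) :
    ∃ x : X, ∀ P hP g, g • x ∈ F P hP g := by
  have : Nonempty {P : Set (Set X) // IsClopenPartition P} :=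
    nonempty_subtype.2 exists_isClopenPartition
  let K : {P : Set (Set X) // IsClopenPartition P} → Set X :=
    fun P => ⋂ g : G, (fun x => g • x) ⁻¹' F P.1 P.2 g
  have hK : ∀ P, IsClosed (K P) := fun P => isClosed_iInter fun g => (hclosed _ _ g).preimage (hc g)
  have hdir : Directed (· ⊇ ·) K := fun P Q => by
    obtain ⟨R, hR, hRP, hRQ⟩ := P.2.exists_common_refinement Q.2
    exact ⟨⟨R, hR⟩, Set.iInter_mono fun g => Set.preimage_mono (hmono _ _ _ _ hRP g),
      Set.iInter_mono fun g => Set.preimage_mono (hmono _ _ _ _ hRQ g)⟩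
  obtain ⟨x, hx⟩ := IsCompact.nonempty_iInter_of_directed_nonempty_isCompact_isClosed K hdir
    (fun P => (hne P.1 P.2).imp fun _ hx => Set.mem_iInter.2 hx) (fun P => (hK P).isCompact) hK
  exact ⟨x, fun P hP g => Set.mem_iInter.1 (Set.mem_iInter.1 hx ⟨P, hP⟩) g⟩

lemma exists_Phi_eq_of_compatible [CompactSpace X] (hc : ∀ g : G, Continuous fun x : X => g • x)
    (F : ∀ P : Set (Set X), IsClopenPartition P → G → Set X)
    (hF : ∀ (P : Set (Set X)) (hP : IsClopenPartition P),
      ∃ x : X, ∀ g : G, F P hP g = (Phi P hP.2.2 x g : Set X))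
    (hmono : ∀ (P P' : Set (Set X)) (hP : IsClopenPartition P) (hP' : IsClopenPartition P'),
      (∀ B ∈ P', ∃ A ∈ P, B ⊆ A) → ∀ g : G, F P' hP' g ⊆ F P hP g) :
    ∃ x : X, ∀ (P : Set (Set X)) (hP : IsClopenPartition P) (g : G),
      F P hP g = (Phi P hP.2.2 x g : Set X) := by
  have hFP : ∀ P hP g, F P hP g ∈ P := fun P hP g => by
    obtain ⟨x, hx⟩ := hF P hP
    rw [hx g]
    exact Subtype.prop _
  obtain ⟨x, hx⟩ := exists_forall_smul_mem_of_compatible hc F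
    (fun P hP g => (hP.1 _ (hFP P hP g)).1.isClosed)
    (fun P hP => let ⟨x, hx⟩ := hF P hP; ⟨x, fun g => (hx g).symm ▸ smul_mem_Phi P hP.2.2 x g⟩)
    hmono
  exact ⟨x, fun P hP g => (partOf_eq_of_mem hP.2.1 hP.2.2 (hFP P hP g) (hx P hP g)).symm⟩

end ClopenPartition

/-- **Every compact zero-dimensional `G`-space is an inverse limit of expansive `G`-spaces
(subshifts).**  For each clopen partition `P` of `X`, the map `φ_P : X → P^G` with
`φ_P(x)(g)` the part of `P` containing `g • x` is continuous (coordinatewise locally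
constant) and `G`-equivariant; its image is a subshift, i.e. it is invariant under the shift
action and the shift-translates of the value-at-identity partition separate its points; the
maps `φ_P` form an inverse system over partitions ordered by refinement; and `X` is the
inverse limit of this system: the `φ_P` jointly separate points, and every compatible thread
of the system arises from a (unique) point of `X`. -/
theorem inverse_limit_of_expansive_quotients {G : Type*} [Group G] [MulAction G X]
    [CompactSpace X] [T2Space X] [TotallyDisconnectedSpace X]
    (hc : ∀ g : G, Continuous fun x : X => g • x) :
    (∀ (P : Set (Set X)) (hP : IsClopenPartition P),
      -- φ_P is well defined: φ_P(x)(g) contains g • x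
      (∀ (x : X) (g : G), g • x ∈ (Phi P hP.2.2 x g : Set X)) ∧
      -- φ_P is continuous into the product of the discrete space P
      (∀ g : G, IsLocallyConstant fun x : X => Phi P hP.2.2 x g) ∧
      -- φ_P is G-equivariant for the shift action (h · f)(g) = f (g * h)
      (∀ (h : G) (x : X) (g : G), Phi P hP.2.2 (h • x) g = Phi P hP.2.2 x (g * h)) ∧
      -- the image of φ_P is shift-invariant, and its points are separated by the
      -- shift-translates of the partition by the value at the identity: (G, φ_P(X)) is a
      -- subshift, in particular an expansive G-space
      (∀ h : G, ∀ f ∈ Set.range (Phi (G := G) P hP.2.2), (fun g => f (g * h)) ∈ Set.range (Phi (G := G) P hP.2.2)) ∧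
      (∀ f ∈ Set.range (Phi (G := G) P hP.2.2), ∀ f' ∈ Set.range (Phi (G := G) P hP.2.2),
        f ≠ f' → ∃ g : G, f g ≠ f' g) ∧
      -- the maps form an inverse system over partitions ordered by refinement
      (∀ (P' : Set (Set X)) (hP' : IsClopenPartition P'),
        (∀ B ∈ P', ∃ A ∈ P, B ⊆ A) →
        ∃ θ : P' → P, (∀ B : P', (B : Set X) ⊆ (θ B : Set X)) ∧
          ∀ (x : X) (g : G), Phi P hP.2.2 x g = θ (Phi P' hP'.2.2 x g))) ∧
    -- the maps φ_P jointly separate the points of X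
    (∀ x y : X, x ≠ y →
      ∃ (P : Set (Set X)) (hP : IsClopenPartition P), Phi (G := G) P hP.2.2 x ≠ Phi (G := G) P hP.2.2 y) ∧
    -- every compatible thread of elements of the images comes from a point of X:
    -- together with the previous separation property, X is the inverse limit of the system
    (∀ F : ∀ P : Set (Set X), IsClopenPartition P → G → Set X,
      (∀ (P : Set (Set X)) (hP : IsClopenPartition P),
        ∃ x : X, ∀ g : G, F P hP g = (Phi P hP.2.2 x g : Set X)) →
      (∀ (P P' : Set (Set X)) (hP : IsClopenPartition P) (hP' : IsClopenPartition P'),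
        (∀ B ∈ P', ∃ A ∈ P, B ⊆ A) → ∀ g : G, F P' hP' g ⊆ F P hP g) →
      ∃ x : X, ∀ (P : Set (Set X)) (hP : IsClopenPartition P) (g : G),
        F P hP g = (Phi P hP.2.2 x g : Set X)) := by
  refine ⟨fun P hP => ⟨smul_mem_Phi P hP.2.2, fun g => ?_, Phi_smul P hP.2.2,
    fun h f => shift_mem_range_Phi P hP.2.2 h, fun f _ f' _ => Function.ne_iff.1,
    fun P' hP' href => ?_⟩, fun x y => exists_isClopenPartition_Phi_ne,
    exists_Phi_eq_of_compatible hc⟩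
  · exact hP.isLocallyConstant_partOf.comp_continuous (hc g)
  · obtain ⟨θ, hθ, hfactor⟩ := exists_partOf_eq_comp_of_refines hP.2.1 hP.2.2 hP'.2.2 href
    exact ⟨θ, hθ, fun x g => hfactor (g • x)⟩
end

section
/- Let X be a perfect compact zero-dimensional space and G ≤ Homeo(X) a group acting minimally on X. Then the alternating full group A(G;X) acts minimally on X, and X admits no proper non-trivial Hausdorff quotient as an A(G;X)-space; consequently A(G;X) acts expansively on X. -/
open Topology

variable {X : Type*} [TopologicalSpace X]

/-- `h` is a `3`-cycle of a multisection of degree 3 of `G`: there are pairwise disjoint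
nonempty clopen sets `e₁, e₂, e₃` and elements `a, b ∈ G` with `a e₁ = e₂`, `b e₂ = e₃`,
such that `h` agrees with `a` on `e₁`, with `b` on `e₂`, with `(b ∘ a)⁻¹` on `e₃`, and is the
identity elsewhere. -/
def IsAltGen (G : Subgroup (X ≃ₜ X)) (h : X ≃ₜ X) : Prop :=
  ∃ (e₁ e₂ e₃ : Set X) (a b : X ≃ₜ X), a ∈ G ∧ b ∈ G ∧
    IsClopen e₁ ∧ IsClopen e₂ ∧ IsClopen e₃ ∧ e₁.Nonempty ∧
    Disjoint e₁ e₂ ∧ Disjoint e₂ e₃ ∧ Disjoint e₁ e₃ ∧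
    (⇑a) '' e₁ = e₂ ∧ (⇑b) '' e₂ = e₃ ∧
    (∀ x ∈ e₁, h x = a x) ∧ (∀ x ∈ e₂, h x = b x) ∧
    (∀ x ∈ e₃, h x = a.symm (b.symm x)) ∧ (∀ x ∉ e₁ ∪ e₂ ∪ e₃, h x = x)

/-- The alternating full group `A(G; X)`: the subgroup generated by the alternating groups of
all multisections of degree 3 of `G`. -/
def altFull (G : Subgroup (X ≃ₜ X)) : Subgroup (X ≃ₜ X) :=
  Subgroup.closure {h | IsAltGen G h}

/-- Clopen image under a homeomorphism. -/
lemma isClopen_image (a : X ≃ₜ X) {s : Set X} (hs : IsClopen s) : IsClopen (⇑a '' s) := by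
  rw [← Homeomorph.preimage_symm]
  exact hs.preimage a.symm.continuous

/-- Existence of the 3-cycle homeomorphism supported on `e₁ ∪ a e₁ ∪ b (a e₁)`. -/
lemma exists_cycle (a b : X ≃ₜ X) {e₁ : Set X} (h₁ : IsClopen e₁)
    (d12 : Disjoint e₁ (⇑a '' e₁))
    (d23 : Disjoint (⇑a '' e₁) (⇑b '' (⇑a '' e₁)))
    (d13 : Disjoint e₁ (⇑b '' (⇑a '' e₁))) :
    ∃ h : X ≃ₜ X, (∀ x ∈ e₁, h x = a x) ∧ (∀ x ∈ ⇑a '' e₁, h x = b x) ∧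
      (∀ x ∈ ⇑b '' (⇑a '' e₁), h x = a.symm (b.symm x)) ∧
      (∀ x ∉ e₁ ∪ ⇑a '' e₁ ∪ ⇑b '' (⇑a '' e₁), h x = x) := by
  classical
  set e₂ := ⇑a '' e₁ with he₂
  set e₃ := ⇑b '' e₂ with he₃
  have h₂ : IsClopen e₂ := isClopen_image a h₁
  have h₃ : IsClopen e₃ := isClopen_image b h₂
  have m12 : ∀ x ∈ e₁, a x ∈ e₂ := fun x hx => ⟨x, hx, rfl⟩
  have m23 : ∀ x ∈ e₂, b x ∈ e₃ := fun x hx => ⟨x, hx, rfl⟩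
  have m31 : ∀ x ∈ e₃, a.symm (b.symm x) ∈ e₁ := by
    rintro x ⟨u, ⟨t, ht, rfl⟩, rfl⟩
    simpa using ht
  have m21 : ∀ x ∈ e₂, a.symm x ∈ e₁ := by
    rintro x ⟨t, ht, rfl⟩; simpa using ht
  have m32 : ∀ x ∈ e₃, b.symm x ∈ e₂ := by
    rintro x ⟨t, ht, rfl⟩; simpa using ht
  set f : X → X :=
    e₁.piecewise (⇑a) (e₂.piecewise (⇑b) (e₃.piecewise (fun x => a.symm (b.symm x)) id)) with hf
  set g : X → X :=
    e₂.piecewise (⇑a.symm) (e₃.piecewise (⇑b.symm) (e₁.piecewise (fun x => b (a x)) id)) with hg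
  have hf₁ : ∀ x ∈ e₁, f x = a x := by
    intro x hx; rw [hf]; exact Set.piecewise_eq_of_mem _ _ _ hx
  have hf₂ : ∀ x ∈ e₂, f x = b x := by
    intro x hx
    rw [hf, Set.piecewise_eq_of_notMem _ _ _ (Set.disjoint_right.mp d12 hx),
      Set.piecewise_eq_of_mem _ _ _ hx]
  have hf₃ : ∀ x ∈ e₃, f x = a.symm (b.symm x) := by
    intro x hx
    rw [hf, Set.piecewise_eq_of_notMem _ _ _ (Set.disjoint_right.mp d13 hx),
      Set.piecewise_eq_of_notMem _ _ _ (Set.disjoint_right.mp d23 hx),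
      Set.piecewise_eq_of_mem _ _ _ hx]
  have hf₀ : ∀ x ∉ e₁ ∪ e₂ ∪ e₃, f x = x := by
    intro x hx
    simp only [Set.mem_union, not_or] at hx
    obtain ⟨⟨x1, x2⟩, x3⟩ := hx
    rw [hf, Set.piecewise_eq_of_notMem _ _ _ x1, Set.piecewise_eq_of_notMem _ _ _ x2,
      Set.piecewise_eq_of_notMem _ _ _ x3]
    rfl
  have hg₂ : ∀ x ∈ e₂, g x = a.symm x := by
    intro x hx; rw [hg]; exact Set.piecewise_eq_of_mem _ _ _ hx
  have hg₃ : ∀ x ∈ e₃, g x = b.symm x := by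
    intro x hx
    rw [hg, Set.piecewise_eq_of_notMem _ _ _ (Set.disjoint_right.mp d23 hx),
      Set.piecewise_eq_of_mem _ _ _ hx]
  have hg₁ : ∀ x ∈ e₁, g x = b (a x) := by
    intro x hx
    rw [hg, Set.piecewise_eq_of_notMem _ _ _ (Set.disjoint_left.mp d12 hx),
      Set.piecewise_eq_of_notMem _ _ _ (Set.disjoint_left.mp d13 hx),
      Set.piecewise_eq_of_mem _ _ _ hx]
  have hg₀ : ∀ x ∉ e₁ ∪ e₂ ∪ e₃, g x = x := by
    intro x hx
    simp only [Set.mem_union, not_or] at hx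
    obtain ⟨⟨x1, x2⟩, x3⟩ := hx
    rw [hg, Set.piecewise_eq_of_notMem _ _ _ x2, Set.piecewise_eq_of_notMem _ _ _ x3,
      Set.piecewise_eq_of_notMem _ _ _ x1]
    rfl
  have hleft : Function.LeftInverse g f := by
    intro x
    by_cases x1 : x ∈ e₁
    · rw [hf₁ x x1, hg₂ _ (m12 x x1), Homeomorph.symm_apply_apply]
    by_cases x2 : x ∈ e₂
    · rw [hf₂ x x2, hg₃ _ (m23 x x2), Homeomorph.symm_apply_apply]
    by_cases x3 : x ∈ e₃
    · rw [hf₃ x x3, hg₁ _ (m31 x x3), Homeomorph.apply_symm_apply,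
        Homeomorph.apply_symm_apply]
    · have hx : x ∉ e₁ ∪ e₂ ∪ e₃ := by simp [x1, x2, x3]
      rw [hf₀ x hx, hg₀ x hx]
  have hright : Function.RightInverse g f := by
    intro x
    by_cases x2 : x ∈ e₂
    · rw [hg₂ x x2, hf₁ _ (m21 x x2), Homeomorph.apply_symm_apply]
    by_cases x3 : x ∈ e₃
    · rw [hg₃ x x3, hf₂ _ (m32 x x3), Homeomorph.apply_symm_apply]
    by_cases x1 : x ∈ e₁
    · rw [hg₁ x x1, hf₃ _ (m23 _ (m12 x x1)), Homeomorph.symm_apply_apply,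
        Homeomorph.symm_apply_apply]
    · have hx : x ∉ e₁ ∪ e₂ ∪ e₃ := by simp [x1, x2, x3]
      rw [hg₀ x hx, hf₀ x hx]
  have cf : Continuous f := by
    rw [hf]
    refine Continuous.piecewise (by simp [h₁.frontier_eq]) a.continuous ?_
    refine Continuous.piecewise (by simp [h₂.frontier_eq]) b.continuous ?_
    exact Continuous.piecewise (by simp [h₃.frontier_eq])
      (a.symm.continuous.comp b.symm.continuous) continuous_id
  have cg : Continuous g := by
    rw [hg]
    refine Continuous.piecewise (by simp [h₂.frontier_eq]) a.symm.continuous ?_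
    refine Continuous.piecewise (by simp [h₃.frontier_eq]) b.symm.continuous ?_
    exact Continuous.piecewise (by simp [h₁.frontier_eq])
      (b.continuous.comp a.continuous) continuous_id
  exact ⟨⟨⟨f, g, hleft, hright⟩, cf, cg⟩, hf₁, hf₂, hf₃, hf₀⟩

/-- From minimality, a point can be moved into any nonempty open set by an element of the
alternating full group fixing a prescribed other point. -/
lemma moveOne [CompactSpace X] [T2Space X] [TotallyDisconnectedSpace X]
    (hperf : ∀ x : X, (𝓝[≠] x).NeBot) (G : Subgroup (X ≃ₜ X))
    (hmin : ∀ x : X, Dense {y | ∃ g ∈ G, g x = y})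
    (y p' : X) (hyp : y ≠ p') {V : Set X} (hV : IsOpen V) (hVne : V.Nonempty) :
    ∃ h : X ≃ₜ X, h ∈ altFull G ∧ h y ∈ V ∧ h p' = p' := by
  classical
  have hdiff : ∀ (W : Set X), IsOpen W → W.Nonempty → ∀ p : X, (W \ {p}).Nonempty := by
    intro W hW hWne p
    by_cases hp : p ∈ W
    · have h1 : W ∈ 𝓝[≠] p := mem_nhdsWithin_of_mem_nhds (hW.mem_nhds hp)
      have h2 : ({p}ᶜ : Set X) ∈ 𝓝[≠] p := self_mem_nhdsWithin
      haveI := hperf p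
      exact (Filter.nonempty_of_mem (Filter.inter_mem h1 h2)).imp fun x hx => ⟨hx.1, hx.2⟩
    · obtain ⟨v, hv⟩ := hWne
      exact ⟨v, hv, fun h => hp (Set.mem_singleton_iff.mp h ▸ hv)⟩
  by_cases hyV : y ∈ V
  · exact ⟨1, one_mem _, hyV, rfl⟩
  have hVp := hdiff V hV hVne p'
  have hVpo : IsOpen (V \ {p'}) := hV.sdiff isClosed_singleton
  obtain ⟨y₂, hy₂s, hy₂U⟩ := (hmin y).exists_mem_open hVpo hVp
  obtain ⟨a, haG, rfl⟩ := hy₂s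
  have hayV : a y ∈ V := hy₂U.1
  have hayp : a y ≠ p' := hy₂U.2
  have hayy : a y ≠ y := fun h => hyV (h ▸ hayV)
  have o1 : IsOpen (Set.univ \ {y} : Set X) := isOpen_univ.sdiff isClosed_singleton
  have n1 : (Set.univ \ {y} : Set X).Nonempty := hdiff _ isOpen_univ ⟨y, trivial⟩ y
  have o2 : IsOpen ((Set.univ \ {y}) \ {a y} : Set X) := o1.sdiff isClosed_singleton
  have n2 := hdiff _ o1 n1 (a y)
  have o3 : IsOpen (((Set.univ \ {y}) \ {a y}) \ {p'} : Set X) := o2.sdiff isClosed_singleton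
  have n3 := hdiff _ o2 n2 p'
  obtain ⟨w, hw⟩ := n3
  obtain ⟨W₃, hW₃c, hwW₃, hW₃sub⟩ := compact_exists_isClopen_in_isOpen o3 hw
  obtain ⟨z, hzs, hzW₃⟩ := (hmin (a y)).exists_mem_open hW₃c.isOpen ⟨w, hwW₃⟩
  obtain ⟨b, hbG, rfl⟩ := hzs
  have hO2 : IsOpen (V ∩ ⇑b ⁻¹' W₃ ∩ (W₃ᶜ ∩ {y}ᶜ ∩ {p'}ᶜ)) :=
    (hV.inter (hW₃c.isOpen.preimage b.continuous)).inter
      ((hW₃c.isClosed.isOpen_compl.inter isOpen_compl_singleton).inter isOpen_compl_singleton)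
  have hmemO2 : a y ∈ V ∩ ⇑b ⁻¹' W₃ ∩ (W₃ᶜ ∩ {y}ᶜ ∩ {p'}ᶜ) :=
    ⟨⟨hayV, hzW₃⟩, ⟨fun hc => (hW₃sub hc).1.2 rfl, hayy⟩, hayp⟩
  obtain ⟨W₂, hW₂c, hayW₂, hW₂sub⟩ := compact_exists_isClopen_in_isOpen hO2 hmemO2
  obtain ⟨N, hNc, hyN, hNsub⟩ := compact_exists_isClopen_in_isOpen
    (isOpen_compl_singleton : IsOpen ({p'}ᶜ : Set X)) (hyp : y ∈ ({p'}ᶜ : Set X))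
  set e₁ : Set X := ⇑a ⁻¹' W₂ ∩ (W₂ ∪ W₃)ᶜ ∩ N with he₁
  have hyW₂ : y ∉ W₂ := fun h => (hW₂sub h).2.1.2 rfl
  have hyW₃ : y ∉ W₃ := fun h => (hW₃sub h).1.1.2 rfl
  have hy₁ : y ∈ e₁ := ⟨⟨hayW₂, fun h => h.elim hyW₂ hyW₃⟩, hyN⟩
  have he₁c : IsClopen e₁ :=
    ((hW₂c.preimage a.continuous).inter (hW₂c.union hW₃c).compl).inter hNc
  have sub₂ : ⇑a '' e₁ ⊆ W₂ := by rintro _ ⟨t, ht, rfl⟩; exact ht.1.1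
  have sub₃ : ⇑b '' (⇑a '' e₁) ⊆ W₃ := by
    rintro _ ⟨t, ht, rfl⟩; exact (hW₂sub (sub₂ ht)).1.2
  have d12 : Disjoint e₁ (⇑a '' e₁) :=
    Set.disjoint_left.mpr fun x hx hx2 => hx.1.2 (Or.inl (sub₂ hx2))
  have d13 : Disjoint e₁ (⇑b '' (⇑a '' e₁)) :=
    Set.disjoint_left.mpr fun x hx hx2 => hx.1.2 (Or.inr (sub₃ hx2))
  have d23 : Disjoint (⇑a '' e₁) (⇑b '' (⇑a '' e₁)) :=
    Set.disjoint_left.mpr fun x hx hx2 => (hW₂sub (sub₂ hx)).2.1.1 (sub₃ hx2)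
  obtain ⟨h, hh₁, hh₂, hh₃, hh₀⟩ := exists_cycle a b he₁c d12 d23 d13
  refine ⟨h, ?_, ?_, ?_⟩
  · exact Subgroup.subset_closure
      ⟨e₁, ⇑a '' e₁, ⇑b '' (⇑a '' e₁), a, b, haG, hbG, he₁c, isClopen_image a he₁c,
        isClopen_image b (isClopen_image a he₁c), ⟨y, hy₁⟩, d12, d23, d13, rfl, rfl,
        hh₁, hh₂, hh₃, hh₀⟩
  · rw [hh₁ y hy₁]; exact hayV
  · refine hh₀ p' ?_
    simp only [Set.mem_union, not_or]
    exact ⟨⟨fun hp => hNsub hp.2 rfl, fun hp => (hW₂sub (sub₂ hp)).2.2 rfl⟩,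
      fun hp => (hW₃sub (sub₃ hp)).2 rfl⟩

/-- Approximate 2-transitivity of the alternating full group. -/
lemma moveTwo [CompactSpace X] [T2Space X] [TotallyDisconnectedSpace X]
    (hperf : ∀ x : X, (𝓝[≠] x).NeBot) (G : Subgroup (X ≃ₜ X))
    (hmin : ∀ x : X, Dense {y | ∃ g ∈ G, g x = y})
    (p q : X) (hpq : p ≠ q) {U V : Set X} (hU : IsOpen U) (hUne : U.Nonempty)
    (hV : IsOpen V) (hVne : V.Nonempty) :
    ∃ h : X ≃ₜ X, h ∈ altFull G ∧ h p ∈ U ∧ h q ∈ V := by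
  obtain ⟨h₁, hm₁, hp₁, hq₁⟩ := moveOne hperf G hmin p q hpq hU hUne
  have hne : q ≠ h₁ p := by
    intro e
    exact hpq (h₁.injective (by rw [← e, hq₁]))
  obtain ⟨h₂, hm₂, hq₂, hp₂⟩ := moveOne hperf G hmin q (h₁ p) hne hV hVne
  refine ⟨h₂ * h₁, mul_mem hm₂ hm₁, ?_, ?_⟩
  · show h₂ (h₁ p) ∈ U
    rw [hp₂]; exact hp₁
  · show h₂ (h₁ q) ∈ V
    rw [hq₁]; exact hq₂

/-- **Dynamics of the alternating full group of a minimal action.**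
Let `X` be a perfect compact zero-dimensional space and `G ≤ Homeo(X)` minimal.  Then
`A(G;X)` acts minimally on `X`; `X` has no proper non-trivial Hausdorff quotient as an
`A(G;X)`-space; and consequently `A(G;X)` acts expansively on `X`. -/
theorem altFull_minimal_no_quotient_expansive
    [CompactSpace X] [T2Space X] [TotallyDisconnectedSpace X] [Nonempty X]
    (hperf : ∀ x : X, (𝓝[≠] x).NeBot)
    (G : Subgroup (X ≃ₜ X))
    (hmin : ∀ x : X, Dense {y | ∃ g ∈ G, g x = y}) :
    (∀ x : X, Dense {y | ∃ h ∈ altFull G, h x = y}) ∧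
    (∀ (Y : Type*) (τY : TopologicalSpace Y), @T2Space Y τY →
      ∀ π : X → Y, @Continuous X Y _ τY π → Function.Surjective π →
      (∀ h ∈ altFull G, ∀ x x' : X, π x = π x' → π (h x) = π (h x')) →
      (Function.Injective π ∨ ∀ x x' : X, π x = π x')) ∧
    (∃ (n : ℕ) (P : Fin n → Set X), (∀ i, IsClopen (P i)) ∧
      Pairwise (Function.onFun Disjoint P) ∧ (⋃ i, P i) = Set.univ ∧
      ∀ x z : X, x ≠ z → ∃ h ∈ altFull G, ∃ i j : Fin n, i ≠ j ∧ h x ∈ P i ∧ h z ∈ P j) := by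
  classical
  have hdiff : ∀ (W : Set X), IsOpen W → W.Nonempty → ∀ p : X, (W \ {p}).Nonempty := by
    intro W hW hWne p
    by_cases hp : p ∈ W
    · have h1 : W ∈ 𝓝[≠] p := mem_nhdsWithin_of_mem_nhds (hW.mem_nhds hp)
      have h2 : ({p}ᶜ : Set X) ∈ 𝓝[≠] p := self_mem_nhdsWithin
      haveI := hperf p
      exact (Filter.nonempty_of_mem (Filter.inter_mem h1 h2)).imp fun x hx => ⟨hx.1, hx.2⟩
    · obtain ⟨v, hv⟩ := hWne
      exact ⟨v, hv, fun h => hp (Set.mem_singleton_iff.mp h ▸ hv)⟩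
  refine ⟨?_, ?_, ?_⟩
  · -- minimality
    intro x
    rw [dense_iff_inter_open]
    intro U hU hUne
    obtain ⟨p', hp'⟩ := hdiff Set.univ isOpen_univ ⟨x, trivial⟩ x
    have hxp : x ≠ p' := fun h => hp'.2 (h ▸ rfl)
    obtain ⟨h, hmem, hxU, -⟩ := moveOne hperf G hmin x p' hxp hU hUne
    exact ⟨h x, hxU, h, hmem, rfl⟩
  · -- no Hausdorff quotient
    intro Y τY hT2 π hcont hsurj hequi
    by_cases hinj : Function.Injective π
    · exact Or.inl hinj
    right
    rw [Function.not_injective_iff] at hinj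
    obtain ⟨p, q, hπpq, hpq⟩ := hinj
    intro x x'
    by_contra hne
    obtain ⟨O₁, O₂, hO₁, hO₂, hx₁, hx₂, hdisj⟩ := @t2_separation Y τY hT2 _ _ hne
    obtain ⟨h, hmem, hp, hq⟩ := moveTwo hperf G hmin p q hpq
      (@IsOpen.preimage X Y _ τY π hcont O₁ hO₁) ⟨x, hx₁⟩
      (@IsOpen.preimage X Y _ τY π hcont O₂ hO₂) ⟨x', hx₂⟩
    have := hequi h hmem p q hπpq
    exact Set.disjoint_left.mp hdisj (this ▸ hp) hq
  · -- expansivity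
    obtain ⟨p₀⟩ := ‹Nonempty X›
    obtain ⟨p₁, hp₁⟩ := hdiff Set.univ isOpen_univ ⟨p₀, trivial⟩ p₀
    have hne : p₀ ∈ ({p₁}ᶜ : Set X) := fun h => hp₁.2 (by simpa using h.symm)
    obtain ⟨A, hAc, hp₀A, hAsub⟩ :=
      compact_exists_isClopen_in_isOpen isOpen_compl_singleton hne
    refine ⟨2, ![A, Aᶜ], ?_, ?_, ?_, ?_⟩
    · intro i
      fin_cases i
      · exact hAc
      · exact hAc.compl
    · intro i j hij
      fin_cases i <;> fin_cases j <;>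
        simp_all [Function.onFun, disjoint_compl_right, disjoint_compl_left]
    · ext t
      simp only [Set.mem_iUnion, Set.mem_univ, iff_true]
      by_cases ht : t ∈ A
      · exact ⟨0, ht⟩
      · exact ⟨1, ht⟩
    · intro x z hxz
      have hAcne : (Aᶜ : Set X).Nonempty := ⟨p₁, fun h => hAsub h rfl⟩
      obtain ⟨h, hmem, hxA, hzA⟩ := moveTwo hperf G hmin x z hxz hAc.isOpen ⟨p₀, hp₀A⟩
        hAc.compl.isOpen hAcne
      exact ⟨h, hmem, 0, 1, by decide, hxA, hzA⟩
end

section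
/- Let G be a topological group with a discrete locally normal subgroup K (i.e., K discrete and N_G(K) open). Then K is contained in the quasicentre QZ(G), and QZ(N_G(K)/K) = QZ(N_G(K))/K. In particular, if QZ(G) is discrete then QZ(G) is the largest discrete normal subgroup of G and QZ(G/QZ(G)) is trivial. -/
/-!
For `x : G` the commutator map `g ↦ ⁅g, x⁆` is continuous with `⁅1, x⁆ = 1`. If it maps a
neighbourhood of `1` into a discrete subgroup `K`, then it maps a smaller neighbourhood to `1`
itself, so the centraliser of `x` is a neighbourhood of `1` and hence open. For `x ∈ K` the
neighbourhood is the open normaliser of `K`; for `x` lifting an element of `QZ(G/K)`, with `K`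
discrete and normal, it is the preimage of the centraliser of `xK`. Conversely the quotient map is
open, so it maps `QZ(G)` into `QZ(G/K)`.
-/

variable {G : Type*} [Group G] [TopologicalSpace G] [IsTopologicalGroup G]

/-- The quasicentre of a topological group: the set of elements with open centraliser. -/
def quasiCentre (G : Type*) [Group G] [TopologicalSpace G] [IsTopologicalGroup G] :
    Subgroup G where
  carrier := {g | IsOpen ((Subgroup.centralizer {g} : Subgroup G) : Set G)}
  one_mem' := by
    have h : Subgroup.centralizer ({(1 : G)} : Set G) = ⊤ := by
      ext x; simp [Subgroup.mem_centralizer_iff]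
    show IsOpen _
    rw [h]
    simp
  mul_mem' := by
    intro a b ha hb
    have hle : Subgroup.centralizer {a} ⊓ Subgroup.centralizer {b} ≤
        Subgroup.centralizer {a * b} := by
      intro x hx
      rw [Subgroup.mem_inf] at hx
      rw [Subgroup.mem_centralizer_iff]
      rintro m hm
      rw [Set.mem_singleton_iff] at hm; subst hm
      have h1 := Subgroup.mem_centralizer_iff.mp hx.1 a (Set.mem_singleton a)
      have h2 := Subgroup.mem_centralizer_iff.mp hx.2 b (Set.mem_singleton b)
      rw [mul_assoc, h2, ← mul_assoc, h1, mul_assoc]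
    refine Subgroup.isOpen_mono hle ?_
    rw [Subgroup.coe_inf]
    exact ha.inter hb
  inv_mem' := by
    intro a ha
    have hle : Subgroup.centralizer {a} ≤ Subgroup.centralizer {a⁻¹} := by
      intro x hx
      rw [Subgroup.mem_centralizer_iff] at hx ⊢
      rintro m hm
      rw [Set.mem_singleton_iff] at hm; subst hm
      have h1 : Commute a x := hx a (Set.mem_singleton a)
      exact h1.inv_left
    exact Subgroup.isOpen_mono hle ha

lemma mem_quasiCentre {g : G} :
    g ∈ quasiCentre G ↔ IsOpen ((Subgroup.centralizer {g} : Subgroup G) : Set G) :=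
  Iff.rfl

instance quasiCentre_normal : (quasiCentre G).Normal := by
  constructor
  intro a ha g
  rw [mem_quasiCentre] at ha ⊢
  have key : ∀ x : G, ((g * a * g⁻¹) * x = x * (g * a * g⁻¹)) ↔
      (a * (g⁻¹ * x * g) = (g⁻¹ * x * g) * a) := by
    intro x
    constructor
    · intro h
      have h' := congrArg (fun y => g⁻¹ * y * g) h
      simpa [mul_assoc] using h'
    · intro h
      have h' := congrArg (fun y => g * y * g⁻¹) h
      simpa [mul_assoc] using h'
  have hφ : IsOpenMap fun x : G => g * x * g⁻¹ := by
    have heq : (fun x : G => g * x * g⁻¹) = (fun x => x * g⁻¹) ∘ (fun x => g * x) := rfl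
    rw [heq]
    exact (Homeomorph.mulRight g⁻¹).isOpenMap.comp (Homeomorph.mulLeft g).isOpenMap
  have himg : ((Subgroup.centralizer {g * a * g⁻¹} : Subgroup G) : Set G)
      = (fun x : G => g * x * g⁻¹) '' ((Subgroup.centralizer {a} : Subgroup G) : Set G) := by
    ext x
    simp only [Set.mem_image, SetLike.mem_coe, Subgroup.mem_centralizer_iff,
      Set.mem_singleton_iff, forall_eq]
    constructor
    · intro h
      refine ⟨g⁻¹ * x * g, (key x).mp h, by group⟩
    · rintro ⟨y, hy, rfl⟩
      apply (key _).mpr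
      simpa [mul_assoc] using hy
  rw [himg]
  exact hφ _ ha

open Filter Topology
open scoped commutatorElement

theorem commutatorElement_mem_of_mem_normalizer {Γ : Type*} [Group Γ] {K : Subgroup Γ} {g k : Γ}
    (hg : g ∈ Subgroup.normalizer (K : Set Γ)) (hk : k ∈ K) : ⁅g, k⁆ ∈ K :=
  K.mul_mem ((Subgroup.mem_normalizer_iff.1 hg k).1 hk) (K.inv_mem hk)

theorem Subgroup.discreteTopology_subgroupOf {Γ : Type*} [Group Γ] [TopologicalSpace Γ]
    {K : Subgroup Γ} (hK : DiscreteTopology K) (N : Subgroup Γ) :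
    DiscreteTopology (K.subgroupOf N) :=
  DiscreteTopology.of_continuous_injective (f := fun k : K.subgroupOf N => (⟨k.1.1, k.2⟩ : K))
    (by fun_prop) fun _ _ h => by
      ext
      simpa using congrArg Subtype.val h

theorem mem_quasiCentre_of_eventually_commutatorElement_mem {K : Subgroup G}
    (hK : DiscreteTopology K) {x : G} (hx : ∀ᶠ g : G in 𝓝 1, ⁅g, x⁆ ∈ K) :
    x ∈ quasiCentre G := by
  obtain ⟨U, hU, hUK⟩ := discreteTopology_subtype_iff'.1 hK 1 K.one_mem
  have hcont : Continuous fun g : G => ⁅g, x⁆ := by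
    simp only [commutatorElement_def]
    fun_prop
  have hU₁ : ∀ᶠ g : G in 𝓝 1, ⁅g, x⁆ ∈ U :=
    hcont.continuousAt.preimage_mem_nhds (by simpa using hU.mem_nhds (hUK.ge rfl).1)
  refine Subgroup.isOpen_of_mem_nhds _ (g := 1) ?_
  filter_upwards [hU₁, hx] with g hgU hgK
  have hg : ⁅g, x⁆ = 1 := hUK.le ⟨hgU, hgK⟩
  exact Subgroup.mem_centralizer_singleton_iff.2 (commutatorElement_eq_one_iff_mul_comm.1 hg)

theorem le_quasiCentre_of_isOpen_normalizer {K : Subgroup G} (hK : DiscreteTopology K)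
    (hN : IsOpen (Subgroup.normalizer (K : Set G) : Set G)) : K ≤ quasiCentre G :=
  fun _ hk => mem_quasiCentre_of_eventually_commutatorElement_mem hK <|
    Filter.mem_of_superset (hN.mem_nhds (Subgroup.one_mem _))
      fun _ hg => commutatorElement_mem_of_mem_normalizer hg hk

theorem Subgroup.Normal.le_quasiCentre {K : Subgroup G} (hK : K.Normal)
    (hKdisc : DiscreteTopology K) : K ≤ quasiCentre G :=
  le_quasiCentre_of_isOpen_normalizer hKdisc <| by
    rw [Subgroup.normalizer_eq_top_iff.2 hK, Subgroup.coe_top]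
    exact isOpen_univ

variable {H : Type*} [Group H] [TopologicalSpace H] [IsTopologicalGroup H]

theorem map_mem_quasiCentre {f : G →* H} (hf : IsOpenMap f) {x : G} (hx : x ∈ quasiCentre G) :
    f x ∈ quasiCentre H := by
  have hmap := Subgroup.map_centralizer_le_centralizer_image {x} f
  rw [Set.image_singleton] at hmap
  exact Subgroup.isOpen_mono hmap (by simpa only [Subgroup.coe_map] using hf _ hx)

theorem mem_quasiCentre_of_map_mem {f : G →* H} (hf : Continuous f)
    (hker : DiscreteTopology f.ker) {x : G} (hx : f x ∈ quasiCentre H) : x ∈ quasiCentre G := by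
  refine mem_quasiCentre_of_eventually_commutatorElement_mem hker ?_
  have h₁ : (Subgroup.centralizer {f x} : Set H) ∈ 𝓝 (f 1) := by
    simpa using hx.mem_nhds (Subgroup.one_mem _)
  filter_upwards [hf.continuousAt.preimage_mem_nhds h₁] with g hg
  rw [MonoidHom.mem_ker, map_commutatorElement, commutatorElement_eq_one_iff_mul_comm]
  exact Subgroup.mem_centralizer_singleton_iff.1 hg

theorem QuotientGroup.mem_quasiCentre_of_mk_mem {M : Subgroup G} [M.Normal]
    (hM : DiscreteTopology M) {x : G} (hx : (x : G ⧸ M) ∈ quasiCentre (G ⧸ M)) :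
    x ∈ quasiCentre G :=
  mem_quasiCentre_of_map_mem (f := QuotientGroup.mk' M) QuotientGroup.continuous_mk
    (by rwa [QuotientGroup.ker_mk']) hx

theorem QuotientGroup.coe_quasiCentre {M : Subgroup G} [M.Normal] (hM : DiscreteTopology M) :
    (quasiCentre (G ⧸ M) : Set (G ⧸ M)) = (↑) '' (quasiCentre G : Set G) := by
  ext q
  obtain ⟨x, rfl⟩ := QuotientGroup.mk_surjective q
  refine ⟨fun hx => ⟨x, mem_quasiCentre_of_mk_mem hM hx, rfl⟩, ?_⟩
  rintro ⟨y, hy, hyx⟩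
  exact hyx ▸ map_mem_quasiCentre (f := QuotientGroup.mk' M) QuotientGroup.isOpenMap_coe hy

theorem quasiCentre_quotient_quasiCentre_eq_bot (h : DiscreteTopology (quasiCentre G)) :
    quasiCentre (G ⧸ quasiCentre G) = ⊥ := by
  refine (Subgroup.eq_bot_iff_forall _).2 fun q hq => ?_
  obtain ⟨x, rfl⟩ := QuotientGroup.mk_surjective q
  exact (QuotientGroup.eq_one_iff x).2 (QuotientGroup.mem_quasiCentre_of_mk_mem h hq)

/-- **Discrete locally normal subgroups and the quasicentre.**
Let `G` be a topological group and `K` a discrete locally normal subgroup (i.e. `K` is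
discrete and its normaliser `N = N_G(K)` is open).  Then `K ≤ QZ(G)`, and
`QZ(N/K) = QZ(N)/K`.  In particular, if `QZ(G)` is discrete, then `QZ(G)` is the largest
discrete normal subgroup of `G`, and `QZ(G/QZ(G))` is trivial. -/
theorem discrete_locally_normal_le_quasiCentre
    (K : Subgroup G) (hKdisc : DiscreteTopology K)
    (hKln : IsOpen ((Subgroup.normalizer (K : Set G)) : Set G)) :
    K ≤ quasiCentre G ∧
    (haveI : (K.subgroupOf (Subgroup.normalizer (K : Set G))).Normal := Subgroup.normal_in_normalizer;
      SetLike.coe (quasiCentre (↥(Subgroup.normalizer (K : Set G)) ⧸ K.subgroupOf (Subgroup.normalizer (K : Set G))))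
        = QuotientGroup.mk '' SetLike.coe (quasiCentre ↥(Subgroup.normalizer (K : Set G)))) ∧
    (DiscreteTopology (quasiCentre G) →
      (∀ N : Subgroup G, N.Normal → DiscreteTopology N → N ≤ quasiCentre G) ∧
      quasiCentre (G ⧸ quasiCentre G) = ⊥) := by
  exact ⟨le_quasiCentre_of_isOpen_normalizer hKdisc hKln,
    QuotientGroup.coe_quasiCentre (Subgroup.discreteTopology_subgroupOf hKdisc _),
    fun hQ => ⟨fun _ hN hNdisc => hN.le_quasiCentre hNdisc,
      quasiCentre_quotient_quasiCentre_eq_bot hQ⟩⟩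
end
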